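/- arXiv:1009.2364 — 6 statements merged into one kernel-verified Lean document; each statement's English description precedes it below -/
import Mathlib

section
/- The following equalities of (finite) Lebesgue integrals hold: ∫_{ℝ²} dx dy / max(|x²+xy²|, |xy|, |xy+y³|, |x|, |x+y²|, 1, |y|) = 3·vol{(t,v,u) ∈ ℝ³ : 0 < |t(ut+v²)| ≤ 1, |uvt| ≤ 1, |uvt+v³| ≤ 1, |u²t| ≤ 1, |u²t+uv²| ≤ 1, 0 < u³ ≤ 1, |u²v| ≤ 1} = 6·∫_0^1 F2(u) du. -/
open MeasureTheory

noncomputable section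

/-- `F₁(u,v)` is the Lebesgue measure of
`{t : 0 < |t(ut+v²)| ≤ 1, |uvt| ≤ 1, |uvt+v³| ≤ 1, |u²t| ≤ 1, |u²t+uv²| ≤ 1}`. -/
def F1 (u v : ℝ) : ℝ :=
  (volume {t : ℝ |
    0 < |t * (u * t + v ^ 2)| ∧ |t * (u * t + v ^ 2)| ≤ 1 ∧
    |u * v * t| ≤ 1 ∧ |u * v * t + v ^ 3| ≤ 1 ∧
    |u ^ 2 * t| ≤ 1 ∧ |u ^ 2 * t + u * v ^ 2| ≤ 1}).toReal

/-- `F₂(u) = ∫_0^{1/u²} F₁(u,v) dv`. -/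
def F2 (u : ℝ) : ℝ := ∫ v in (0:ℝ)..(1 / u ^ 2), F1 u v

/-!
Every quantity bounded on the region `S` of the theorem is a cubic form in `q = (t, v, u)`, and at
`u = 1` these forms are the entries of the maximum `M(x, y)` in the integrand. Hence for `u > 0` the
slice of `S` at height `u` is `u • {p : u³ M(p) ≤ 1}` up to the null curve `x² + xy² = 0`, of area
`u² |{u³ ≤ 1/M}|`. Integrating in `u` and substituting `s = u³` turns `3 vol S` into
`∫₀^∞ |{s ≤ 1/M}| ds`, which is `∫ 1/M` by the layer-cake formula.

For the second identity slice the other way: for `0 < u ≤ 1` the `t`-section of `S` at `(v, u)` is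
the set measured by `F1 u v` when `|u²v| ≤ 1` and is empty otherwise, and it is even in `v`, so the
slice of `S` at height `u` has area `2 F2(u)`.
-/

open Set
open scoped ENNReal Pointwise

namespace MeasureTheory.Measure

variable {α β γ : Type*} [MeasurableSpace α] [MeasurableSpace β] [MeasurableSpace γ]
  {μ : Measure α} {ν : Measure β} {τ : Measure γ} [SFinite μ] [SFinite ν] [SFinite τ]
  {s : Set (α × β × γ)}

theorem prod_prod_apply_symm (hs : MeasurableSet s) :
    μ.prod (ν.prod τ) s = ∫⁻ z, μ.prod ν {p | (p.1, p.2, z) ∈ s} ∂τ := by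
  rw [← (measurePreserving_prodAssoc μ ν τ).measure_preimage hs.nullMeasurableSet,
    prod_apply_symm (MeasurableEquiv.prodAssoc.measurable hs)]
  rfl

theorem measurable_measure_prod_slice_right (hs : MeasurableSet s) :
    Measurable fun z => μ.prod ν {p | (p.1, p.2, z) ∈ s} :=
  measurable_measure_prodMk_right (MeasurableEquiv.prodAssoc.measurable hs)

end MeasureTheory.Measure

theorem lintegral_eq_two_mul_setLIntegral_Ioi_of_even {g : ℝ → ℝ≥0∞} (hg : ∀ x, g (-x) = g x) :
    ∫⁻ x, g x = 2 * ∫⁻ x in Ioi 0, g x := by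
  have hIic : ∫⁻ x in Iic 0, g x = ∫⁻ x in Ioi 0, g x := by
    rw [← (Measure.measurePreserving_neg volume).setLIntegral_comp_preimage_emb
      (Homeomorph.neg ℝ).measurableEmbedding, neg_preimage, neg_Iic, neg_zero,
      setLIntegral_congr Ioi_ae_eq_Ici.symm]
    simp only [hg]
  rw [← lintegral_add_compl g measurableSet_Ioi, compl_Ioi, hIic, two_mul]

theorem lintegral_Ioi_eq_lintegral_Ioi_comp_cube (g : ℝ → ℝ≥0∞) :
    ∫⁻ s in Ioi 0, g s = ∫⁻ u in Ioi 0, ENNReal.ofReal (3 * u ^ 2) * g (u ^ 3) := by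
  have himage : (· ^ 3) '' Ioi (0 : ℝ) = Ioi 0 := by
    refine Subset.antisymm (image_subset_iff.2 fun u (hu : 0 < u) => pow_pos hu 3) fun s hs => ?_
    exact ⟨s ^ ((3 : ℕ) : ℝ)⁻¹, Real.rpow_pos_of_pos hs _,
      Real.rpow_inv_natCast_pow hs.le three_ne_zero⟩
  have hinj : InjOn (· ^ 3) (Ioi (0 : ℝ)) :=
    (pow_left_strictMonoOn₀ three_ne_zero).injOn.mono fun u hu => le_of_lt hu
  nth_rw 1 [← himage]
  rw [lintegral_image_eq_lintegral_abs_deriv_mul measurableSet_Ioi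
    (fun u _ => (hasDerivAt_pow 3 u).hasDerivWithinAt) hinj]
  refine setLIntegral_congr_fun measurableSet_Ioi fun u _ => ?_
  norm_num [abs_of_nonneg (sq_nonneg u)]

namespace RealDensity

def maxForm (p : ℝ × ℝ) : ℝ :=
  max (max (max (max (max (max |p.1 ^ 2 + p.1 * p.2 ^ 2| |p.1 * p.2|)
    |p.1 * p.2 + p.2 ^ 3|) |p.1|) |p.1 + p.2 ^ 2|) 1) |p.2|

def densityRegion : Set (ℝ × ℝ × ℝ) := {q : ℝ × ℝ × ℝ |
  0 < |q.1 * (q.2.2 * q.1 + q.2.1 ^ 2)| ∧ |q.1 * (q.2.2 * q.1 + q.2.1 ^ 2)| ≤ 1 ∧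
  |q.2.2 * q.2.1 * q.1| ≤ 1 ∧ |q.2.2 * q.2.1 * q.1 + q.2.1 ^ 3| ≤ 1 ∧
  |q.2.2 ^ 2 * q.1| ≤ 1 ∧ |q.2.2 ^ 2 * q.1 + q.2.2 * q.2.1 ^ 2| ≤ 1 ∧
  0 < q.2.2 ^ 3 ∧ q.2.2 ^ 3 ≤ 1 ∧ |q.2.2 ^ 2 * q.2.1| ≤ 1}

def uSlice (u : ℝ) : Set (ℝ × ℝ) := {p | (p.1, p.2, u) ∈ densityRegion}

/-- `F1 u v` is `(volume (tFiber u v)).toReal` by definition. -/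
def tFiber (u v : ℝ) : Set ℝ := {t : ℝ |
  0 < |t * (u * t + v ^ 2)| ∧ |t * (u * t + v ^ 2)| ≤ 1 ∧
  |u * v * t| ≤ 1 ∧ |u * v * t + v ^ 3| ≤ 1 ∧
  |u ^ 2 * t| ≤ 1 ∧ |u ^ 2 * t + u * v ^ 2| ≤ 1}

def degenerateLocus : Set (ℝ × ℝ) := {p | p.1 ^ 2 + p.1 * p.2 ^ 2 = 0}

theorem one_le_maxForm (p : ℝ × ℝ) : 1 ≤ maxForm p :=
  (le_max_right _ 1).trans (le_max_left _ _)

theorem continuous_maxForm : Continuous maxForm := by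
  unfold maxForm
  fun_prop

theorem measurableSet_densityRegion : MeasurableSet densityRegion := by
  unfold densityRegion
  measurability

theorem measurableSet_uSlice (u : ℝ) : MeasurableSet (uSlice u) :=
  measurableSet_densityRegion.preimage (by fun_prop)

theorem volume_degenerateLocus : volume degenerateLocus = 0 := by
  have hmeas : MeasurableSet degenerateLocus :=
    measurableSet_eq_fun (by fun_prop) measurable_const
  have hslice (y : ℝ) : volume ((fun x => (x, y)) ⁻¹' degenerateLocus) = 0 := by
    refine measure_mono_null (fun x (hx : x ^ 2 + x * y ^ 2 = 0) => ?_)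
      ((toFinite {0, -y ^ 2}).measure_zero _)
    have : x * (x + y ^ 2) = 0 := by linear_combination hx
    rcases mul_eq_zero.1 this with h | h
    · exact Or.inl h
    · exact Or.inr (eq_neg_of_add_eq_zero_left h)
  rw [Measure.volume_eq_prod, Measure.prod_apply_symm hmeas]
  simp only [hslice, lintegral_zero]

theorem mk_smul_mem_densityRegion_iff {u : ℝ} (hu : 0 < u) (p : ℝ × ℝ) :
    (u * p.1, u * p.2, u) ∈ densityRegion ↔ u ^ 3 ≤ (maxForm p)⁻¹ ∧ p ∉ degenerateLocus := by
  obtain ⟨x, y⟩ := p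
  have hu3 : 0 < u ^ 3 := by positivity
  rw [← mul_one (maxForm _)⁻¹, le_inv_mul_iff₀ (zero_lt_one.trans_le (one_le_maxForm _))]
  have e1 : u * x * (u * (u * x) + (u * y) ^ 2) = (x ^ 2 + x * y ^ 2) * u ^ 3 := by ring
  have e2 : u * (u * y) * (u * x) + (u * y) ^ 3 = (x * y + y ^ 3) * u ^ 3 := by ring
  have e3 : u * (u * y) * (u * x) = (x * y) * u ^ 3 := by ring
  have e4 : u ^ 2 * (u * x) + u * (u * y) ^ 2 = (x + y ^ 2) * u ^ 3 := by ring
  have e5 : u ^ 2 * (u * x) = x * u ^ 3 := by ring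
  have e6 : u ^ 2 * (u * y) = y * u ^ 3 := by ring
  simp only [densityRegion, degenerateLocus, maxForm, mem_ofPred_eq]
  rw [e1, e2, e3, e4, e5, e6]
  simp only [abs_mul, abs_of_pos hu3, max_mul_of_nonneg _ _ hu3.le, max_le_iff, one_mul,
    mul_pos_iff_of_pos_right hu3, abs_pos, hu3, true_and]
  tauto

theorem uSlice_eq_smul {u : ℝ} (hu : 0 < u) :
    uSlice u = u • ({p | u ^ 3 ≤ (maxForm p)⁻¹} \ degenerateLocus) := by
  rw [← smul_inv_smul₀ hu.ne' (uSlice u)]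
  congr 1
  ext p
  rw [mem_inv_smul_set_iff₀ hu.ne']
  exact mk_smul_mem_densityRegion_iff hu p

theorem volume_uSlice {u : ℝ} (hu : 0 < u) :
    volume (uSlice u) = ENNReal.ofReal (u ^ 2) * volume {p | u ^ 3 ≤ (maxForm p)⁻¹} := by
  rw [uSlice_eq_smul hu, Measure.addHaar_smul, measure_sdiff_null volume_degenerateLocus]
  simp [abs_of_nonneg (sq_nonneg u)]

theorem mem_Ioc_of_uSlice_nonempty {u : ℝ} (h : (uSlice u).Nonempty) : u ∈ Ioc 0 1 := by
  obtain ⟨p, -, -, -, -, -, -, hpos, hle, -⟩ := h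
  have hu : 0 < u := (Odd.pow_pos_iff (by decide)).1 hpos
  exact ⟨hu, (pow_le_one_iff_of_nonneg hu.le three_ne_zero).1 hle⟩

theorem support_volume_uSlice_subset : (fun u => volume (uSlice u)).support ⊆ Ioc 0 1 :=
  fun _ hu => mem_Ioc_of_uSlice_nonempty (nonempty_of_measure_ne_zero hu)

theorem volume_densityRegion : volume densityRegion = ∫⁻ u, volume (uSlice u) :=
  Measure.prod_prod_apply_symm measurableSet_densityRegion

theorem inv_maxForm_nonneg (p : ℝ × ℝ) : 0 ≤ (maxForm p)⁻¹ :=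
  inv_nonneg.2 (zero_le_one.trans (one_le_maxForm p))

theorem measurable_inv_maxForm : Measurable fun p => (maxForm p)⁻¹ :=
  continuous_maxForm.measurable.inv

theorem lintegral_inv_maxForm :
    ∫⁻ p, ENNReal.ofReal (maxForm p)⁻¹ = 3 * volume densityRegion := by
  have hslice : ∀ u ∈ Ioi (0 : ℝ), ENNReal.ofReal (3 * u ^ 2) *
      volume {p | u ^ 3 ≤ (maxForm p)⁻¹} = 3 * volume (uSlice u) := fun u hu => by
    rw [volume_uSlice hu, ← mul_assoc, ENNReal.ofReal_mul zero_le_three, ENNReal.ofReal_ofNat]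
  rw [lintegral_eq_lintegral_meas_le volume (ae_of_all _ inv_maxForm_nonneg)
      measurable_inv_maxForm.aemeasurable,
    lintegral_Ioi_eq_lintegral_Ioi_comp_cube, setLIntegral_congr_fun measurableSet_Ioi hslice,
    lintegral_const_mul' _ _ ENNReal.ofNat_ne_top, volume_densityRegion,
    setLIntegral_eq_of_support_subset (support_volume_uSlice_subset.trans Ioc_subset_Ioi_self)]

theorem integral_inv_maxForm : ∫ p, (maxForm p)⁻¹ = 3 * (volume densityRegion).toReal := by
  rw [integral_eq_lintegral_of_nonneg_ae (ae_of_all _ inv_maxForm_nonneg)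
      measurable_inv_maxForm.aestronglyMeasurable,
    lintegral_inv_maxForm, ENNReal.toReal_mul, ENNReal.toReal_ofNat]

theorem abs_le_inv_of_abs_mul_le {a x : ℝ} (ha : 0 < a) (h : |a * x| ≤ 1) : |x| ≤ a⁻¹ := by
  rwa [← mul_one a⁻¹, le_inv_mul_iff₀ ha, ← abs_of_pos ha, ← abs_mul]

theorem uSlice_subset_closedBall {u : ℝ} (hu : 0 < u) :
    uSlice u ⊆ Metric.closedBall 0 (u ^ 2)⁻¹ := by
  rintro ⟨t, v⟩ ⟨-, -, -, -, ht, -, -, -, hv⟩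
  rw [mem_closedBall_zero_iff, Prod.norm_def, Real.norm_eq_abs, Real.norm_eq_abs]
  exact max_le (abs_le_inv_of_abs_mul_le (by positivity) ht)
    (abs_le_inv_of_abs_mul_le (by positivity) hv)

theorem volume_uSlice_lt_top {u : ℝ} (hu : 0 < u) : volume (uSlice u) < ⊤ :=
  (measure_mono (uSlice_subset_closedBall hu)).trans_lt measure_closedBall_lt_top

theorem volume_preimage_mk_uSlice_lt_top {u : ℝ} (hu : 0 < u) (v : ℝ) :
    volume ((fun t => (t, v)) ⁻¹' uSlice u) < ⊤ := by
  have hsub : (fun t => (t, v)) ⁻¹' uSlice u ⊆ Metric.closedBall 0 (u ^ 2)⁻¹ := fun t ht => by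
    have := uSlice_subset_closedBall hu ht
    rw [mem_closedBall_zero_iff] at this ⊢
    exact (norm_fst_le _).trans this
  exact (measure_mono hsub).trans_lt measure_closedBall_lt_top

theorem mk_mem_uSlice_iff {u v t : ℝ} (hu : u ∈ Ioc 0 1) :
    (t, v) ∈ uSlice u ↔ t ∈ tFiber u v ∧ |u ^ 2 * v| ≤ 1 := by
  simp only [uSlice, densityRegion, tFiber, mem_ofPred_eq, pow_pos hu.1 3,
    pow_le_one₀ hu.1.le hu.2, true_and]
  tauto

theorem neg_mem_uSlice_iff {u v t : ℝ} : (t, -v) ∈ uSlice u ↔ (t, v) ∈ uSlice u := by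
  simp only [uSlice, densityRegion, mem_ofPred_eq, neg_sq, mul_neg, neg_mul,
    Odd.neg_pow (by decide : Odd 3), abs_neg, ← neg_add]

theorem volume_uSlice_eq_two_mul {u : ℝ} (hu : u ∈ Ioc 0 1) :
    volume (uSlice u) =
      2 * ∫⁻ v in Ioc 0 (1 / u ^ 2), volume ((fun t => (t, v)) ⁻¹' uSlice u) := by
  have heven (v : ℝ) : volume ((fun t => (t, -v)) ⁻¹' uSlice u) =
      volume ((fun t => (t, v)) ⁻¹' uSlice u) := by
    congr 1
    ext t
    exact neg_mem_uSlice_iff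
  have hsupp :
      (fun v => volume ((fun t => (t, v)) ⁻¹' uSlice u)).support ⊆ Iic (1 / u ^ 2) := by
    intro v hv
    obtain ⟨t, ht⟩ := nonempty_of_measure_ne_zero hv
    rw [mem_Iic, one_div]
    exact (le_abs_self v).trans
      (abs_le_inv_of_abs_mul_le (pow_pos hu.1 2) ((mk_mem_uSlice_iff hu).1 ht).2)
  rw [Measure.volume_eq_prod, Measure.prod_apply_symm (measurableSet_uSlice u),
    lintegral_eq_two_mul_setLIntegral_Ioi_of_even heven, ← Iic_inter_Ioi,
    ← Measure.restrict_restrict measurableSet_Iic, setLIntegral_eq_of_support_subset hsupp]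

theorem F2_eq_toReal_volume_uSlice {u : ℝ} (hu : u ∈ Ioc 0 1) :
    F2 u = (volume (uSlice u)).toReal / 2 := by
  have hF1 : ∀ v ∈ Ioc 0 (1 / u ^ 2),
      F1 u v = (volume ((fun t => (t, v)) ⁻¹' uSlice u)).toReal := by
    intro v hv
    have hv' : |u ^ 2 * v| ≤ 1 := by
      rw [abs_of_pos (mul_pos (pow_pos hu.1 2) hv.1), ← le_div_iff₀' (pow_pos hu.1 2)]
      exact hv.2
    show (volume (tFiber u v)).toReal = _
    congr 2
    ext t
    rw [mem_preimage, mk_mem_uSlice_iff hu]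
    exact (and_iff_left hv').symm
  rw [F2, intervalIntegral.integral_of_le (by positivity),
    setIntegral_congr_fun measurableSet_Ioc hF1,
    integral_toReal (measurable_measure_prodMk_right (measurableSet_uSlice u)).aemeasurable
      (ae_of_all _ (volume_preimage_mk_uSlice_lt_top hu.1)),
    volume_uSlice_eq_two_mul hu, ENNReal.toReal_mul, ENNReal.toReal_ofNat]
  ring

theorem toReal_volume_densityRegion :
    (volume densityRegion).toReal = 2 * ∫ u in (0 : ℝ)..1, F2 u := by
  have hmeas : Measurable fun u => volume (uSlice u) :=
    Measure.measurable_measure_prod_slice_right measurableSet_densityRegion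
  rw [intervalIntegral.integral_of_le zero_le_one,
    setIntegral_congr_fun measurableSet_Ioc fun u hu => F2_eq_toReal_volume_uSlice hu,
    integral_div, integral_toReal hmeas.aemeasurable
      ((ae_restrict_iff' measurableSet_Ioc).2
        (ae_of_all _ fun u hu => volume_uSlice_lt_top hu.1)),
    setLIntegral_eq_of_support_subset support_volume_uSlice_subset, ← volume_densityRegion]
  ring

end RealDensity

/-- Coordinates on `ℝ³` are `q = (t, v, u)`. -/
theorem real_density_integral_identities :
    (∫ p : ℝ × ℝ,
        (max (max (max (max (max (max |p.1 ^ 2 + p.1 * p.2 ^ 2| |p.1 * p.2|)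
          |p.1 * p.2 + p.2 ^ 3|) |p.1|) |p.1 + p.2 ^ 2|) 1) |p.2|)⁻¹)
      = 3 * (volume {q : ℝ × ℝ × ℝ |
          0 < |q.1 * (q.2.2 * q.1 + q.2.1 ^ 2)| ∧ |q.1 * (q.2.2 * q.1 + q.2.1 ^ 2)| ≤ 1 ∧
          |q.2.2 * q.2.1 * q.1| ≤ 1 ∧ |q.2.2 * q.2.1 * q.1 + q.2.1 ^ 3| ≤ 1 ∧
          |q.2.2 ^ 2 * q.1| ≤ 1 ∧ |q.2.2 ^ 2 * q.1 + q.2.2 * q.2.1 ^ 2| ≤ 1 ∧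
          0 < q.2.2 ^ 3 ∧ q.2.2 ^ 3 ≤ 1 ∧ |q.2.2 ^ 2 * q.2.1| ≤ 1}).toReal ∧
    3 * (volume {q : ℝ × ℝ × ℝ |
          0 < |q.1 * (q.2.2 * q.1 + q.2.1 ^ 2)| ∧ |q.1 * (q.2.2 * q.1 + q.2.1 ^ 2)| ≤ 1 ∧
          |q.2.2 * q.2.1 * q.1| ≤ 1 ∧ |q.2.2 * q.2.1 * q.1 + q.2.1 ^ 3| ≤ 1 ∧
          |q.2.2 ^ 2 * q.1| ≤ 1 ∧ |q.2.2 ^ 2 * q.1 + q.2.2 * q.2.1 ^ 2| ≤ 1 ∧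
          0 < q.2.2 ^ 3 ∧ q.2.2 ^ 3 ≤ 1 ∧ |q.2.2 ^ 2 * q.2.1| ≤ 1}).toReal
      = 6 * ∫ u in (0:ℝ)..1, F2 u := by
  refine ⟨RealDensity.integral_inv_maxForm, ?_⟩
  change 3 * (volume RealDensity.densityRegion).toReal = _
  rw [RealDensity.toReal_volume_densityRegion]
  ring
end
end

section
/- Let η1, η2, η3, η4, α1, α2, α3 be elements of a commutative ring satisfying η2α1² + η3α2 + η4α3 = 0. Then the 7-tuple (y0,…,y6) = (α2α3, η1η2η3α1α2, η1η2η4α1α3, η1²η2η3²η4α2, η1²η2η3η4²α3, η1⁴η2²η3³η4³, η1³η2²η3²η4²α1) satisfies the nine equations y3²+y0y5+y1y6 = 0, y2y3−y0y6 = 0, y1y2+y0y3+y0y4 = 0, y3y5+y4y5+y6² = 0, y2y5−y4y6 = 0, y1y5−y3y6 = 0, y4²+y0y5+y2y6 = 0, y3y4−y0y5 = 0, y1y4−y0y6 = 0. -/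
/-! Under the torsor map the five binomial equations become identities between monomials, and each
of the other four becomes a monomial multiple of the torsor equation `η₂α₁² + η₃α₂ + η₄α₃`. -/

/-- The universal torsor map `π(η,α)` lands on the `A₂` del Pezzo surface of degree 6:
if `η₂α₁² + η₃α₂ + η₄α₃ = 0` then the image satisfies the nine defining equations. -/
theorem torsor_map_satisfies_equations {R : Type*} [CommRing R]
    (η1 η2 η3 η4 a1 a2 a3 y0 y1 y2 y3 y4 y5 y6 : R)
    (htor : η2 * a1 ^ 2 + η3 * a2 + η4 * a3 = 0)
    (h0 : y0 = a2 * a3)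
    (h1 : y1 = η1 * η2 * η3 * a1 * a2)
    (h2 : y2 = η1 * η2 * η4 * a1 * a3)
    (h3 : y3 = η1 ^ 2 * η2 * η3 ^ 2 * η4 * a2)
    (h4 : y4 = η1 ^ 2 * η2 * η3 * η4 ^ 2 * a3)
    (h5 : y5 = η1 ^ 4 * η2 ^ 2 * η3 ^ 3 * η4 ^ 3)
    (h6 : y6 = η1 ^ 3 * η2 ^ 2 * η3 ^ 2 * η4 ^ 2 * a1) :
    y3 ^ 2 + y0 * y5 + y1 * y6 = 0 ∧
    y2 * y3 - y0 * y6 = 0 ∧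
    y1 * y2 + y0 * y3 + y0 * y4 = 0 ∧
    y3 * y5 + y4 * y5 + y6 ^ 2 = 0 ∧
    y2 * y5 - y4 * y6 = 0 ∧
    y1 * y5 - y3 * y6 = 0 ∧
    y4 ^ 2 + y0 * y5 + y2 * y6 = 0 ∧
    y3 * y4 - y0 * y5 = 0 ∧
    y1 * y4 - y0 * y6 = 0 := by
  subst h0 h1 h2 h3 h4 h5 h6
  refine ⟨?_, by ring, ?_, ?_, by ring, by ring, ?_, by ring, by ring⟩
  · linear_combination (η1 ^ 4 * η2 ^ 2 * η3 ^ 3 * η4 ^ 2 * a2) * htor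
  · linear_combination (η1 ^ 2 * η2 * η3 * η4 * a2 * a3) * htor
  · linear_combination (η1 ^ 6 * η2 ^ 3 * η3 ^ 4 * η4 ^ 4) * htor
  · linear_combination (η1 ^ 4 * η2 ^ 2 * η3 ^ 2 * η4 ^ 3 * a3) * htor
end

section
/- Let x be a rational point of S all seven of whose primitive integral coordinates are nonzero, and let (x0,…,x6) ∈ ℤ⁷ be its primitive integral representative with x5 > 0. Then there exists exactly one tuple (η1,η2,η3,η4,α1,α2,α3) ∈ ℤ⁷ such that: η2α1² + η3α2 + η4α3 = 0; gcd(α1, η1η3η4) = gcd(α2, η1η2η4) = gcd(α3, η1η2η3) = 1; gcd(η2,η3) = gcd(η2,η4) = gcd(η3,η4) = 1; η1, η2, η3, η4 > 0; α1α2α3 ≠ 0; and π(η1,η2,η3,η4,α1,α2,α3) = (x0,…,x6). -/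
private lemma fact_eq_nat {a b : ℕ} (ha : a ≠ 0) (hb : b ≠ 0)
    (h : ∀ p : ℕ, p.Prime → a.factorization p = b.factorization p) : a = b := by
  have hf : a.factorization = b.factorization := by
    ext p
    by_cases hp : p.Prime
    · exact h p hp
    · rw [Nat.factorization_eq_zero_of_not_prime a hp,
        Nat.factorization_eq_zero_of_not_prime b hp]
  exact Nat.factorization_inj (Set.mem_setOf.mpr ha) (Set.mem_setOf.mpr hb) hf

private lemma fact_coprime {a b : ℕ} (ha : a ≠ 0) (hb : b ≠ 0)
    (h : ∀ p : ℕ, p.Prime → a.factorization p = 0 ∨ b.factorization p = 0) :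
    Nat.gcd a b = 1 := by
  by_contra hc
  obtain ⟨p, pp, pdvd⟩ := Nat.exists_prime_and_dvd hc
  have hpa := Nat.Prime.factorization_pos_of_dvd pp ha (pdvd.trans (Nat.gcd_dvd_left a b))
  have hpb := Nat.Prime.factorization_pos_of_dvd pp hb (pdvd.trans (Nat.gcd_dvd_right a b))
  rcases h p pp with h0 | h0 <;> omega

private lemma fact_gcd_apply {a b : ℕ} (ha : a ≠ 0) (hb : b ≠ 0) (p : ℕ) :
    (Nat.gcd a b).factorization p = min (a.factorization p) (b.factorization p) := by
  rw [Nat.factorization_gcd ha hb]; rfl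

private lemma fact_div_apply {d n : ℕ} (h : d ∣ n) (p : ℕ) :
    (n / d).factorization p = n.factorization p - d.factorization p := by
  rw [Nat.factorization_div h]; rfl

private lemma fact_mul_apply {a b : ℕ} (ha : a ≠ 0) (hb : b ≠ 0) (p : ℕ) :
    (a * b).factorization p = a.factorization p + b.factorization p := by
  rw [Nat.factorization_mul ha hb]; rfl


private lemma fact_pow_apply (a n p : ℕ) : (a ^ n).factorization p = n * a.factorization p := by
  rw [Nat.factorization_pow]; simp

private lemma pow_dvd_int {p k : ℕ} (pp : p.Prime) {x : ℤ} (hx : x ≠ 0)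
    (h : k ≤ x.natAbs.factorization p) : (p : ℤ) ^ k ∣ x := by
  have : p ^ k ∣ x.natAbs := (Nat.Prime.pow_dvd_iff_le_factorization pp
    (Int.natAbs_ne_zero.mpr hx)).mpr h
  rw [← Int.natCast_pow] at *
  exact Int.natCast_dvd.mpr this

private lemma le_fact_int {p k : ℕ} (pp : p.Prime) {x : ℤ} (hx : x ≠ 0)
    (h : (p : ℤ) ^ k ∣ x) : k ≤ x.natAbs.factorization p := by
  rw [← Int.natCast_pow, Int.natCast_dvd] at h
  exact (Nat.Prime.pow_dvd_iff_le_factorization pp (Int.natAbs_ne_zero.mpr hx)).mp h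

private lemma min_le_fact_add {p : ℕ} (pp : p.Prime) {x y : ℤ} (hx : x ≠ 0) (hy : y ≠ 0)
    (hxy : x + y ≠ 0) :
    min (x.natAbs.factorization p) (y.natAbs.factorization p)
      ≤ (x + y).natAbs.factorization p := by
  apply le_fact_int pp hxy
  exact dvd_add (pow_dvd_int pp hx (min_le_left _ _)) (pow_dvd_int pp hy (min_le_right _ _))

private lemma fact_add_of_lt {p : ℕ} (pp : p.Prime) {x y : ℤ} (hx : x ≠ 0) (hy : y ≠ 0)
    (hxy : x + y ≠ 0)
    (h : x.natAbs.factorization p < y.natAbs.factorization p) :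
    (x + y).natAbs.factorization p = x.natAbs.factorization p := by
  refine le_antisymm ?_ ?_
  · by_contra hcon
    push_neg at hcon
    have h1 : (p : ℤ) ^ (x.natAbs.factorization p + 1) ∣ x + y := pow_dvd_int pp hxy hcon
    have h2 : (p : ℤ) ^ (x.natAbs.factorization p + 1) ∣ y := pow_dvd_int pp hy (by omega)
    have h3 : (p : ℤ) ^ (x.natAbs.factorization p + 1) ∣ x := by
      have := dvd_sub h1 h2
      simpa using this
    have := le_fact_int pp hx h3
    omega
  · have := min_le_fact_add pp hx hy hxy
    omega
set_option maxHeartbeats 1000000 in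
private theorem core_val (e3 e4 e5 e6 m vE vP vQ vM vN vu vG a b c d : ℕ)
    (hvE1 : vE ≤ e5) (hvE2 : vE ≤ e6) (hvE3 : vE = e5 ∨ vE = e6)
    (hvP1 : vP ≤ e3) (hvP2 : vP ≤ vE) (hvP3 : vP = e3 ∨ vP = vE)
    (hvQ1 : vQ ≤ e4) (hvQ2 : vQ ≤ vE) (hvQ3 : vQ = e4 ∨ vQ = vE)
    (hvM : vM + vP = vE) (hvN : vN + vQ = vE) (hvu : vu + vE = e5)
    (hvG1 : vG ≤ vM) (hvG2 : vG ≤ vN) (hvG3 : vG = vM ∨ vG = vN)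
    (ha1 : a ≤ vG) (ha2 : a ≤ vu) (ha3 : a = vG ∨ a = vu)
    (hb : b + a = vG)
    (hc1 : c + a ≤ vN) (hc2 : c + a ≤ vu) (hc3 : c + a = vN ∨ c + a = vu)
    (hd1 : d + a ≤ vM) (hd2 : d + a ≤ vu) (hd3 : d + a = vM ∨ d + a = vu)
    (hle3 : e5 ≤ e3 + e6) (hle4 : e5 ≤ e4 + e6) (hle0 : e5 ≤ e3 + e4)
    (Q4 : 2 * e6 = e5 + m)
    (hm : (e3 = e4 ∧ e3 ≤ m) ∨ (e3 < e4 ∧ m = e3) ∨ (e4 < e3 ∧ m = e4))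
    (hP : e3 + e4 = e5 ∨ e3 + e6 = e5 ∨ e4 + e6 = e5 ∨ e3 = 0 ∨ e4 = 0 ∨ e5 = 0 ∨ e6 = 0) :
    e5 = 4*a + 2*b + 3*c + 3*d ∧ vE = 3*a + 2*b + 2*c + 2*d ∧
    vP = 2*a + b + 2*c + d ∧ vQ = 2*a + b + c + 2*d ∧
    (e6 = vE ∨ a + c + d = 0) ∧ (e3 = vP ∨ a + b + d = 0) ∧ (e4 = vQ ∨ a + b + c = 0) ∧
    (b = 0 ∨ c = 0) ∧ (b = 0 ∨ d = 0) ∧ (c = 0 ∨ d = 0) := by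
  rcases Nat.eq_zero_or_pos e5 with h5 | h5
  · -- L1
    have k1 : vE = 0 := by clear hvE3 hvP3 hvQ3 hvG3 ha3 hc3 hd3; omega
    have k2 : vP = 0 := by clear hvE3 hvP3 hvQ3 hvG3 ha3 hc3 hd3; omega
    have k3 : vQ = 0 := by clear hvE3 hvP3 hvQ3 hvG3 ha3 hc3 hd3; omega
    have k4 : vM = 0 := by clear hvE3 hvP3 hvQ3 hvG3 ha3 hc3 hd3; omega
    have k5 : vN = 0 := by clear hvE3 hvP3 hvQ3 hvG3 ha3 hc3 hd3; omega
    have k6 : vu = 0 := by clear hvE3 hvP3 hvQ3 hvG3 ha3 hc3 hd3; omega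
    have k7 : vG = 0 := by clear hvE3 hvP3 hvQ3 hvG3 ha3 hc3 hd3; omega
    have k8 : a = 0 := by clear hvE3 hvP3 hvQ3 hvG3 ha3 hc3 hd3; omega
    have k9 : b = 0 := by clear hvE3 hvP3 hvQ3 hvG3 ha3 hc3 hd3; omega
    have k10 : c = 0 := by clear hvE3 hvP3 hvQ3 hvG3 ha3 hc3 hd3; omega
    have k11 : d = 0 := by clear hvE3 hvP3 hvQ3 hvG3 ha3 hc3 hd3; omega
    clear hvE3 hvP3 hvQ3 hvG3 ha3 hc3 hd3
    omega
  · rcases hm with ⟨h34, hm2⟩ | ⟨h34, hm2⟩ | ⟨h34, hm2⟩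
    · have h2t : 2 * e3 = e5 := by clear hvE3 hvP3 hvQ3 hvG3 ha3 hc3 hd3; omega
      clear hP
      rcases le_total e6 (2 * e3) with hcc | hcc
      · -- L3
        have j0 : 3 * e3 ≤ 2 * e6 := by clear hvE3 hvP3 hvQ3 hvG3 ha3 hc3 hd3; omega
        have k1 : vE = e6 := by clear hvP3 hvQ3 hvG3 ha3 hc3 hd3; omega
        have k2 : vP = e3 := by clear hvE3 hvQ3 hvG3 ha3 hc3 hd3; omega
        have k3 : vQ = e3 := by clear hvE3 hvP3 hvG3 ha3 hc3 hd3; omega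
        have k4 : vM + e3 = e6 := by clear hvE3 hvP3 hvQ3 hvG3 ha3 hc3 hd3; omega
        have k5 : vN + e3 = e6 := by clear hvE3 hvP3 hvQ3 hvG3 ha3 hc3 hd3; omega
        have k6 : vu + e6 = 2 * e3 := by clear hvE3 hvP3 hvQ3 hvG3 ha3 hc3 hd3; omega
        have k7 : vG + e3 = e6 := by clear hvE3 hvP3 hvQ3 ha3 hc3 hd3; omega
        have k8 : a + e6 = 2 * e3 := by clear hvE3 hvP3 hvQ3 hvG3 hc3 hd3; omega
        have k9 : b + 3 * e3 = 2 * e6 := by clear hvE3 hvP3 hvQ3 hvG3 ha3 hc3 hd3; omega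
        have k10 : c = 0 := by clear hvE3 hvP3 hvQ3 hvG3 ha3 hc3 hd3; omega
        have k11 : d = 0 := by clear hvE3 hvP3 hvQ3 hvG3 ha3 hc3 hd3; omega
        clear hvE3 hvP3 hvQ3 hvG3 ha3 hc3 hd3
        omega
      · -- L2
        have k1 : vE = 2 * e3 := by clear hvP3 hvQ3 hvG3 ha3 hc3 hd3; omega
        have k2 : vP = e3 := by clear hvE3 hvQ3 hvG3 ha3 hc3 hd3; omega
        have k3 : vQ = e3 := by clear hvE3 hvP3 hvG3 ha3 hc3 hd3; omega
        have k4 : vM = e3 := by clear hvE3 hvP3 hvQ3 hvG3 ha3 hc3 hd3; omega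
        have k5 : vN = e3 := by clear hvE3 hvP3 hvQ3 hvG3 ha3 hc3 hd3; omega
        have k6 : vu = 0 := by clear hvE3 hvP3 hvQ3 hvG3 ha3 hc3 hd3; omega
        have k7 : vG = e3 := by clear hvE3 hvP3 hvQ3 ha3 hc3 hd3; omega
        have k8 : a = 0 := by clear hvE3 hvP3 hvQ3 hvG3 ha3 hc3 hd3; omega
        have k9 : b = e3 := by clear hvE3 hvP3 hvQ3 hvG3 ha3 hc3 hd3; omega
        have k10 : c = 0 := by clear hvE3 hvP3 hvQ3 hvG3 ha3 hc3 hd3; omega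
        have k11 : d = 0 := by clear hvE3 hvP3 hvQ3 hvG3 ha3 hc3 hd3; omega
        clear hvE3 hvP3 hvQ3 hvG3 ha3 hc3 hd3
        omega
    · have hkey : e3 + e4 = e5 ∨ e3 + e6 = e5 := by clear hvE3 hvP3 hvQ3 hvG3 ha3 hc3 hd3; omega
      clear hP
      rcases hkey with hk | hk
      · -- L4
        have j0 : e4 + 2 * e3 = 2 * e6 := by clear hvE3 hvP3 hvQ3 hvG3 ha3 hc3 hd3; omega
        have j1 : e6 ≤ 2 * e3 := by clear hvE3 hvP3 hvQ3 hvG3 ha3 hc3 hd3; omega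
        have j2 : 3 * e3 ≤ 2 * e6 := by clear hvE3 hvP3 hvQ3 hvG3 ha3 hc3 hd3; omega
        have k1 : vE = e6 := by clear hvP3 hvQ3 hvG3 ha3 hc3 hd3; omega
        have k2 : vP = e3 := by clear hvE3 hvQ3 hvG3 ha3 hc3 hd3; omega
        have k3 : vQ = e4 := by clear hvE3 hvP3 hvG3 ha3 hc3 hd3; omega
        have k4 : vM + e3 = e6 := by clear hvE3 hvP3 hvQ3 hvG3 ha3 hc3 hd3; omega
        have k5 : vN + e6 = 2 * e3 := by clear hvE3 hvP3 hvQ3 hvG3 ha3 hc3 hd3; omega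
        have k6 : vu + e3 = e6 := by clear hvE3 hvP3 hvQ3 hvG3 ha3 hc3 hd3; omega
        have k7 : vG + e6 = 2 * e3 := by clear hvE3 hvP3 hvQ3 ha3 hc3 hd3; omega
        have k8 : a + e6 = 2 * e3 := by clear hvE3 hvP3 hvQ3 hvG3 hc3 hd3; omega
        have k9 : b = 0 := by clear hvE3 hvP3 hvQ3 hvG3 ha3 hc3 hd3; omega
        have k10 : c = 0 := by clear hvE3 hvP3 hvQ3 hvG3 ha3 hc3 hd3; omega
        have k11 : d + 3 * e3 = 2 * e6 := by clear hvE3 hvP3 hvQ3 hvG3 ha3 hc3; omega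
        clear hvE3 hvP3 hvQ3 hvG3 ha3 hc3 hd3
        omega
      · -- L5
        have j0 : e6 = 2 * e3 := by clear hvE3 hvP3 hvQ3 hvG3 ha3 hc3 hd3; omega
        have j1 : e5 = 3 * e3 := by clear hvE3 hvP3 hvQ3 hvG3 ha3 hc3 hd3; omega
        have j2 : 2 * e3 ≤ e4 := by clear hvE3 hvP3 hvQ3 hvG3 ha3 hc3 hd3; omega
        have k1 : vE = 2 * e3 := by clear hvP3 hvQ3 hvG3 ha3 hc3 hd3; omega
        have k2 : vP = e3 := by clear hvE3 hvQ3 hvG3 ha3 hc3 hd3; omega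
        have k3 : vQ = 2 * e3 := by clear hvE3 hvP3 hvG3 ha3 hc3 hd3; omega
        have k4 : vM = e3 := by clear hvE3 hvP3 hvQ3 hvG3 ha3 hc3 hd3; omega
        have k5 : vN = 0 := by clear hvE3 hvP3 hvQ3 hvG3 ha3 hc3 hd3; omega
        have k6 : vu = e3 := by clear hvE3 hvP3 hvQ3 hvG3 ha3 hc3 hd3; omega
        have k7 : vG = 0 := by clear hvE3 hvP3 hvQ3 hvG3 ha3 hc3 hd3; omega
        have k8 : a = 0 := by clear hvE3 hvP3 hvQ3 hvG3 ha3 hc3 hd3; omega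
        have k9 : b = 0 := by clear hvE3 hvP3 hvQ3 hvG3 ha3 hc3 hd3; omega
        have k10 : c = 0 := by clear hvE3 hvP3 hvQ3 hvG3 ha3 hc3 hd3; omega
        have k11 : d = e3 := by clear hvE3 hvP3 hvQ3 hvG3 ha3 hc3; omega
        clear hvE3 hvP3 hvQ3 hvG3 ha3 hc3 hd3
        omega
    · have hkey : e3 + e4 = e5 ∨ e4 + e6 = e5 := by clear hvE3 hvP3 hvQ3 hvG3 ha3 hc3 hd3; omega
      clear hP
      rcases hkey with hk | hk
      · -- L6
        have j0 : e3 + 2 * e4 = 2 * e6 := by clear hvE3 hvP3 hvQ3 hvG3 ha3 hc3 hd3; omega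
        have j1 : e6 ≤ 2 * e4 := by clear hvE3 hvP3 hvQ3 hvG3 ha3 hc3 hd3; omega
        have j2 : 3 * e4 ≤ 2 * e6 := by clear hvE3 hvP3 hvQ3 hvG3 ha3 hc3 hd3; omega
        have k1 : vE = e6 := by clear hvP3 hvQ3 hvG3 ha3 hc3 hd3; omega
        have k2 : vP = e3 := by clear hvE3 hvQ3 hvG3 ha3 hc3 hd3; omega
        have k3 : vQ = e4 := by clear hvE3 hvP3 hvG3 ha3 hc3 hd3; omega
        have k4 : vM + e6 = 2 * e4 := by clear hvE3 hvP3 hvQ3 hvG3 ha3 hc3 hd3; omega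
        have k5 : vN + e4 = e6 := by clear hvE3 hvP3 hvQ3 hvG3 ha3 hc3 hd3; omega
        have k6 : vu + e4 = e6 := by clear hvE3 hvP3 hvQ3 hvG3 ha3 hc3 hd3; omega
        have k7 : vG + e6 = 2 * e4 := by clear hvE3 hvP3 hvQ3 ha3 hc3 hd3; omega
        have k8 : a + e6 = 2 * e4 := by clear hvE3 hvP3 hvQ3 hvG3 hc3 hd3; omega
        have k9 : b = 0 := by clear hvE3 hvP3 hvQ3 hvG3 ha3 hc3 hd3; omega
        have k10 : c + 3 * e4 = 2 * e6 := by clear hvE3 hvP3 hvQ3 hvG3 ha3 hd3; omega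
        have k11 : d = 0 := by clear hvE3 hvP3 hvQ3 hvG3 ha3 hc3 hd3; omega
        clear hvE3 hvP3 hvQ3 hvG3 ha3 hc3 hd3
        omega
      · -- L7
        have j0 : e6 = 2 * e4 := by clear hvE3 hvP3 hvQ3 hvG3 ha3 hc3 hd3; omega
        have j1 : e5 = 3 * e4 := by clear hvE3 hvP3 hvQ3 hvG3 ha3 hc3 hd3; omega
        have j2 : 2 * e4 ≤ e3 := by clear hvE3 hvP3 hvQ3 hvG3 ha3 hc3 hd3; omega
        have k1 : vE = 2 * e4 := by clear hvP3 hvQ3 hvG3 ha3 hc3 hd3; omega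
        have k2 : vP = 2 * e4 := by clear hvE3 hvQ3 hvG3 ha3 hc3 hd3; omega
        have k3 : vQ = e4 := by clear hvE3 hvP3 hvG3 ha3 hc3 hd3; omega
        have k4 : vM = 0 := by clear hvE3 hvP3 hvQ3 hvG3 ha3 hc3 hd3; omega
        have k5 : vN = e4 := by clear hvE3 hvP3 hvQ3 hvG3 ha3 hc3 hd3; omega
        have k6 : vu = e4 := by clear hvE3 hvP3 hvQ3 hvG3 ha3 hc3 hd3; omega
        have k7 : vG = 0 := by clear hvE3 hvP3 hvQ3 hvG3 ha3 hc3 hd3; omega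
        have k8 : a = 0 := by clear hvE3 hvP3 hvQ3 hvG3 ha3 hc3 hd3; omega
        have k9 : b = 0 := by clear hvE3 hvP3 hvQ3 hvG3 ha3 hc3 hd3; omega
        have k10 : c = e4 := by clear hvE3 hvP3 hvQ3 hvG3 ha3 hd3; omega
        have k11 : d = 0 := by clear hvE3 hvP3 hvQ3 hvG3 ha3 hc3 hd3; omega
        clear hvE3 hvP3 hvQ3 hvG3 ha3 hc3 hd3
        omega
noncomputable section

/-- The nine defining equations of the surface `S ⊂ ℙ⁶`. -/
def SEqs (x : Fin 7 → ℤ) : Prop :=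
  x 3 ^ 2 + x 0 * x 5 + x 1 * x 6 = 0 ∧
  x 2 * x 3 - x 0 * x 6 = 0 ∧
  x 1 * x 2 + x 0 * x 3 + x 0 * x 4 = 0 ∧
  x 3 * x 5 + x 4 * x 5 + x 6 ^ 2 = 0 ∧
  x 2 * x 5 - x 4 * x 6 = 0 ∧
  x 1 * x 5 - x 3 * x 6 = 0 ∧
  x 4 ^ 2 + x 0 * x 5 + x 2 * x 6 = 0 ∧
  x 3 * x 4 - x 0 * x 5 = 0 ∧
  x 1 * x 4 - x 0 * x 6 = 0

/-- A primitive integral vector. -/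
def IsPrim (x : Fin 7 → ℤ) : Prop := Finset.gcd Finset.univ x = 1

/-- The universal torsor map `π(η₁,η₂,η₃,η₄,α₁,α₂,α₃)`. -/
def torsorMap (η1 η2 η3 η4 a1 a2 a3 : ℤ) : Fin 7 → ℤ :=
  ![a2 * a3, η1 * η2 * η3 * a1 * a2, η1 * η2 * η4 * a1 * a3,
    η1 ^ 2 * η2 * η3 ^ 2 * η4 * a2, η1 ^ 2 * η2 * η3 * η4 ^ 2 * a3,
    η1 ^ 4 * η2 ^ 2 * η3 ^ 3 * η4 ^ 3, η1 ^ 3 * η2 ^ 2 * η3 ^ 2 * η4 ^ 2 * a1]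

/-- The conditions singling out the canonical integral point on the universal torsor
above a rational point `x`. -/
def TorsorCond (x : Fin 7 → ℤ) (e : ℤ × ℤ × ℤ × ℤ × ℤ × ℤ × ℤ) : Prop :=
  match e with
  | (η1, η2, η3, η4, a1, a2, a3) =>
    η2 * a1 ^ 2 + η3 * a2 + η4 * a3 = 0 ∧
    Int.gcd a1 (η1 * η3 * η4) = 1 ∧ Int.gcd a2 (η1 * η2 * η4) = 1 ∧
    Int.gcd a3 (η1 * η2 * η3) = 1 ∧
    Int.gcd η2 η3 = 1 ∧ Int.gcd η2 η4 = 1 ∧ Int.gcd η3 η4 = 1 ∧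
    0 < η1 ∧ 0 < η2 ∧ 0 < η3 ∧ 0 < η4 ∧
    a1 * a2 * a3 ≠ 0 ∧
    torsorMap η1 η2 η3 η4 a1 a2 a3 = x

set_option maxHeartbeats 1000000 in
/-- Above each rational point of `U` with all coordinates nonzero (represented by its
primitive integral vector with `x₅ > 0`) there is exactly one integral point on the
universal torsor satisfying the coprimality and positivity conditions. -/
theorem unique_torsor_point (x : Fin 7 → ℤ)
    (heq : SEqs x) (hprim : IsPrim x) (hnz : ∀ i, x i ≠ 0) (h5 : 0 < x 5) :
    ∃! e : ℤ × ℤ × ℤ × ℤ × ℤ × ℤ × ℤ, TorsorCond x e := by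
  obtain ⟨q1, q2, q3, q4, q5, q6, q7, q8, q9⟩ := heq
  have hnzn : ∀ i, (x i).natAbs ≠ 0 := fun i => Int.natAbs_ne_zero.mpr (hnz i)
  -- basic product identities at the natAbs level
  have hL6 : (x 1).natAbs * (x 5).natAbs = (x 3).natAbs * (x 6).natAbs := by
    rw [← Int.natAbs_mul, ← Int.natAbs_mul]; congr 1; linarith
  have hL5 : (x 2).natAbs * (x 5).natAbs = (x 4).natAbs * (x 6).natAbs := by
    rw [← Int.natAbs_mul, ← Int.natAbs_mul]; congr 1; linarith
  have hL8 : (x 0).natAbs * (x 5).natAbs = (x 3).natAbs * (x 4).natAbs := by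
    rw [← Int.natAbs_mul, ← Int.natAbs_mul]; congr 1; linarith
  set s : ℤ := x 3 + x 4 with hs_def
  have hsnz : s ≠ 0 := by
    intro h
    have : x 6 ^ 2 = 0 := by rw [hs_def] at h; nlinarith [q4]
    exact hnz 6 (by exact pow_eq_zero_iff (n := 2) (by norm_num) |>.mp this)
  have hs6 : (x 6).natAbs ^ 2 = s.natAbs * (x 5).natAbs := by
    rw [← Int.natAbs_pow, ← Int.natAbs_mul]
    have : x 6 ^ 2 = -(s * x 5) := by rw [hs_def]; ring_nf; linarith
    rw [this, Int.natAbs_neg]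
  -- primitivity: for each prime some coordinate is not divisible
  have hpr : ∀ p : ℕ, p.Prime → ∃ i : Fin 7, ¬ (p : ℤ) ∣ x i := by
    intro p pp
    by_contra hcon
    push_neg at hcon
    have hdvd : (p : ℤ) ∣ Finset.gcd Finset.univ x :=
      Finset.dvd_gcd fun i _ => hcon i
    rw [hprim] at hdvd
    have := Int.le_of_dvd one_pos hdvd
    have := pp.two_le
    omega
  -- global definitions
  set E : ℕ := Nat.gcd (x 5).natAbs (x 6).natAbs with hE_def
  set P : ℕ := Nat.gcd (x 3).natAbs E with hP_def
  set Q : ℕ := Nat.gcd (x 4).natAbs E with hQ_def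
  set U : ℕ := (x 5).natAbs / E with hU_def
  set M : ℕ := E / P with hM_def
  set N : ℕ := E / Q with hN_def
  set G : ℕ := Nat.gcd M N with hG_def
  set A : ℕ := Nat.gcd G U with hA_def
  set B : ℕ := G / A with hB_def
  set C : ℕ := Nat.gcd N U / A with hC_def
  set D : ℕ := Nat.gcd M U / A with hD_def
  have hE0 : E ≠ 0 := fun h => hnzn 5 (Nat.eq_zero_of_gcd_eq_zero_left h)
  have hP0 : P ≠ 0 := fun h => hnzn 3 (Nat.eq_zero_of_gcd_eq_zero_left h)
  have hQ0 : Q ≠ 0 := fun h => hnzn 4 (Nat.eq_zero_of_gcd_eq_zero_left h)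
  have hPE : P ∣ E := Nat.gcd_dvd_right _ _
  have hQE : Q ∣ E := Nat.gcd_dvd_right _ _
  have hE5 : E ∣ (x 5).natAbs := Nat.gcd_dvd_left _ _
  have hE6 : E ∣ (x 6).natAbs := Nat.gcd_dvd_right _ _
  have hP3 : P ∣ (x 3).natAbs := Nat.gcd_dvd_left _ _
  have hQ4 : Q ∣ (x 4).natAbs := Nat.gcd_dvd_left _ _
  have hU0 : U ≠ 0 := by
    rw [hU_def]; exact fun h => hnzn 5 (by
      have := Nat.div_mul_cancel hE5
      rw [h, zero_mul] at this; exact this.symm)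
  have hM0 : M ≠ 0 := by
    rw [hM_def]; exact fun h => hE0 (by
      have := Nat.div_mul_cancel hPE
      rw [h, zero_mul] at this; exact this.symm)
  have hN0 : N ≠ 0 := by
    rw [hN_def]; exact fun h => hE0 (by
      have := Nat.div_mul_cancel hQE
      rw [h, zero_mul] at this; exact this.symm)
  have hG0 : G ≠ 0 := fun h => hM0 (Nat.eq_zero_of_gcd_eq_zero_left h)
  have hA0 : A ≠ 0 := fun h => hG0 (Nat.eq_zero_of_gcd_eq_zero_left h)
  have hAG : A ∣ G := Nat.gcd_dvd_left _ _
  have hAU : A ∣ U := Nat.gcd_dvd_right _ _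
  have hGM : G ∣ M := Nat.gcd_dvd_left _ _
  have hGN : G ∣ N := Nat.gcd_dvd_right _ _
  have hANU : A ∣ Nat.gcd N U := Nat.dvd_gcd (hAG.trans hGN) hAU
  have hAMU : A ∣ Nat.gcd M U := Nat.dvd_gcd (hAG.trans hGM) hAU
  have hNU0 : Nat.gcd N U ≠ 0 := fun h => hN0 (Nat.eq_zero_of_gcd_eq_zero_left h)
  have hMU0 : Nat.gcd M U ≠ 0 := fun h => hM0 (Nat.eq_zero_of_gcd_eq_zero_left h)
  have hB0 : B ≠ 0 := by
    rw [hB_def]; exact fun h => hG0 (by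
      have := Nat.div_mul_cancel hAG
      rw [h, zero_mul] at this; exact this.symm)
  have hC0 : C ≠ 0 := by
    rw [hC_def]; exact fun h => hNU0 (by
      have := Nat.div_mul_cancel hANU
      rw [h, zero_mul] at this; exact this.symm)
  have hD0 : D ≠ 0 := by
    rw [hD_def]; exact fun h => hMU0 (by
      have := Nat.div_mul_cancel hAMU
      rw [h, zero_mul] at this; exact this.symm)
  -- the per-prime structure theorem
  have key : ∀ p : ℕ, p.Prime →
      (x 5).natAbs.factorization p = 4 * A.factorization p + 2 * B.factorization p
          + 3 * C.factorization p + 3 * D.factorization p ∧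
      E.factorization p = 3 * A.factorization p + 2 * B.factorization p
          + 2 * C.factorization p + 2 * D.factorization p ∧
      P.factorization p = 2 * A.factorization p + B.factorization p
          + 2 * C.factorization p + D.factorization p ∧
      Q.factorization p = 2 * A.factorization p + B.factorization p
          + C.factorization p + 2 * D.factorization p ∧
      ((x 6).natAbs.factorization p = E.factorization p ∨
        A.factorization p + C.factorization p + D.factorization p = 0) ∧
      ((x 3).natAbs.factorization p = P.factorization p ∨
        A.factorization p + B.factorization p + D.factorization p = 0) ∧
      ((x 4).natAbs.factorization p = Q.factorization p ∨
        A.factorization p + B.factorization p + C.factorization p = 0) ∧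
      (B.factorization p = 0 ∨ C.factorization p = 0) ∧
      (B.factorization p = 0 ∨ D.factorization p = 0) ∧
      (C.factorization p = 0 ∨ D.factorization p = 0) := by
    intro p pp
    -- valuations of coordinates
    have hLa : (x 1).natAbs.factorization p + (x 5).natAbs.factorization p
        = (x 3).natAbs.factorization p + (x 6).natAbs.factorization p := by
      rw [← fact_mul_apply (hnzn 1) (hnzn 5), ← fact_mul_apply (hnzn 3) (hnzn 6), hL6]
    have hLb : (x 2).natAbs.factorization p + (x 5).natAbs.factorization p
        = (x 4).natAbs.factorization p + (x 6).natAbs.factorization p := by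
      rw [← fact_mul_apply (hnzn 2) (hnzn 5), ← fact_mul_apply (hnzn 4) (hnzn 6), hL5]
    have hLc : (x 0).natAbs.factorization p + (x 5).natAbs.factorization p
        = (x 3).natAbs.factorization p + (x 4).natAbs.factorization p := by
      rw [← fact_mul_apply (hnzn 0) (hnzn 5), ← fact_mul_apply (hnzn 3) (hnzn 4), hL8]
    have hQ4' : 2 * (x 6).natAbs.factorization p
        = (x 5).natAbs.factorization p + s.natAbs.factorization p := by
      have h1 : ((x 6).natAbs ^ 2).factorization p = 2 * (x 6).natAbs.factorization p := by
        rw [Nat.factorization_pow]; simp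
      have h2 := fact_mul_apply (Int.natAbs_ne_zero.mpr hsnz) (hnzn 5) p
      rw [← hs6, h1] at h2
      omega
    have hm : ((x 3).natAbs.factorization p = (x 4).natAbs.factorization p ∧
          (x 3).natAbs.factorization p ≤ s.natAbs.factorization p) ∨
        ((x 3).natAbs.factorization p < (x 4).natAbs.factorization p ∧
          s.natAbs.factorization p = (x 3).natAbs.factorization p) ∨
        ((x 4).natAbs.factorization p < (x 3).natAbs.factorization p ∧
          s.natAbs.factorization p = (x 4).natAbs.factorization p) := by
      rcases lt_trichotomy ((x 3).natAbs.factorization p) ((x 4).natAbs.factorization p)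
        with h | h | h
      · exact Or.inr (Or.inl ⟨h, hs_def ▸ fact_add_of_lt pp (hnz 3) (hnz 4) (hs_def ▸ hsnz) h⟩)
      · left
        refine ⟨h, ?_⟩
        have h2 := min_le_fact_add pp (hnz 3) (hnz 4) hsnz
        rw [h, min_self, ← hs_def] at h2
        omega
      · right; right
        refine ⟨h, ?_⟩
        have : (x 4 + x 3).natAbs.factorization p = (x 4).natAbs.factorization p :=
          fact_add_of_lt pp (hnz 4) (hnz 3) (by rw [add_comm]; exact hsnz) h
        rw [add_comm, ← hs_def] at this
        exact this
    have hPrim : (x 0).natAbs.factorization p = 0 ∨ (x 1).natAbs.factorization p = 0 ∨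
        (x 2).natAbs.factorization p = 0 ∨ (x 3).natAbs.factorization p = 0 ∨
        (x 4).natAbs.factorization p = 0 ∨ (x 5).natAbs.factorization p = 0 ∨
        (x 6).natAbs.factorization p = 0 := by
      obtain ⟨i, hi⟩ := hpr p pp
      have hi' : (x i).natAbs.factorization p = 0 :=
        Nat.factorization_eq_zero_of_not_dvd (fun h => hi (Int.natCast_dvd.mpr h))
      fin_cases i
      · exact Or.inl hi'
      · exact Or.inr (Or.inl hi')
      · exact Or.inr (Or.inr (Or.inl hi'))
      · exact Or.inr (Or.inr (Or.inr (Or.inl hi')))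
      · exact Or.inr (Or.inr (Or.inr (Or.inr (Or.inl hi'))))
      · exact Or.inr (Or.inr (Or.inr (Or.inr (Or.inr (Or.inl hi')))))
      · exact Or.inr (Or.inr (Or.inr (Or.inr (Or.inr (Or.inr hi')))))
    have hPP : (x 3).natAbs.factorization p + (x 4).natAbs.factorization p
          = (x 5).natAbs.factorization p ∨
        (x 3).natAbs.factorization p + (x 6).natAbs.factorization p
          = (x 5).natAbs.factorization p ∨
        (x 4).natAbs.factorization p + (x 6).natAbs.factorization p
          = (x 5).natAbs.factorization p ∨
        (x 3).natAbs.factorization p = 0 ∨ (x 4).natAbs.factorization p = 0 ∨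
        (x 5).natAbs.factorization p = 0 ∨ (x 6).natAbs.factorization p = 0 := by
      omega
    -- valuations of the constructed quantities
    have fE := fact_gcd_apply (hnzn 5) (hnzn 6) p
    rw [← hE_def] at fE
    have fP := fact_gcd_apply (hnzn 3) hE0 p
    rw [← hP_def] at fP
    have fQ := fact_gcd_apply (hnzn 4) hE0 p
    rw [← hQ_def] at fQ
    have fU := fact_div_apply hE5 p
    rw [← hU_def] at fU
    have fM := fact_div_apply hPE p
    rw [← hM_def] at fM
    have fN := fact_div_apply hQE p
    rw [← hN_def] at fN
    have fG := fact_gcd_apply hM0 hN0 p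
    rw [← hG_def] at fG
    have fA := fact_gcd_apply hG0 hU0 p
    rw [← hA_def] at fA
    have fB := fact_div_apply hAG p
    rw [← hB_def] at fB
    have fNU := fact_gcd_apply hN0 hU0 p
    have fC := fact_div_apply hANU p
    rw [← hC_def] at fC
    have fMU := fact_gcd_apply hM0 hU0 p
    have fD := fact_div_apply hAMU p
    rw [← hD_def] at fD
    -- triples
    have hvE1 : E.factorization p ≤ (x 5).natAbs.factorization p := by
      rw [fE]; exact min_le_left _ _
    have hvE2 : E.factorization p ≤ (x 6).natAbs.factorization p := by
      rw [fE]; exact min_le_right _ _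
    have hvE3 : E.factorization p = (x 5).natAbs.factorization p ∨
        E.factorization p = (x 6).natAbs.factorization p := by
      rw [fE]; exact min_choice _ _
    have hvP1 : P.factorization p ≤ (x 3).natAbs.factorization p := by
      rw [fP]; exact min_le_left _ _
    have hvP2 : P.factorization p ≤ E.factorization p := by
      rw [fP]; exact min_le_right _ _
    have hvP3 : P.factorization p = (x 3).natAbs.factorization p ∨
        P.factorization p = E.factorization p := by
      rw [fP]; exact min_choice _ _
    have hvQ1 : Q.factorization p ≤ (x 4).natAbs.factorization p := by
      rw [fQ]; exact min_le_left _ _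
    have hvQ2 : Q.factorization p ≤ E.factorization p := by
      rw [fQ]; exact min_le_right _ _
    have hvQ3 : Q.factorization p = (x 4).natAbs.factorization p ∨
        Q.factorization p = E.factorization p := by
      rw [fQ]; exact min_choice _ _
    have hvM : M.factorization p + P.factorization p = E.factorization p := by
      rw [fM]; exact Nat.sub_add_cancel hvP2
    have hvN : N.factorization p + Q.factorization p = E.factorization p := by
      rw [fN]; exact Nat.sub_add_cancel hvQ2
    have hvu : U.factorization p + E.factorization p = (x 5).natAbs.factorization p := by
      rw [fU]; exact Nat.sub_add_cancel hvE1
    have hvG1 : G.factorization p ≤ M.factorization p := by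
      rw [fG]; exact min_le_left _ _
    have hvG2 : G.factorization p ≤ N.factorization p := by
      rw [fG]; exact min_le_right _ _
    have hvG3 : G.factorization p = M.factorization p ∨
        G.factorization p = N.factorization p := by
      rw [fG]; exact min_choice _ _
    have ha1 : A.factorization p ≤ G.factorization p := by
      rw [fA]; exact min_le_left _ _
    have ha2 : A.factorization p ≤ U.factorization p := by
      rw [fA]; exact min_le_right _ _
    have ha3 : A.factorization p = G.factorization p ∨
        A.factorization p = U.factorization p := by
      rw [fA]; exact min_choice _ _
    have hb : B.factorization p + A.factorization p = G.factorization p := by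
      rw [fB]; exact Nat.sub_add_cancel ha1
    have hfANU : A.factorization p ≤ (Nat.gcd N U).factorization p := by
      rw [fNU]; exact le_min (le_trans ha1 hvG2) ha2
    have hceq : C.factorization p + A.factorization p = (Nat.gcd N U).factorization p := by
      rw [fC]; exact Nat.sub_add_cancel hfANU
    have hc1 : C.factorization p + A.factorization p ≤ N.factorization p := by
      rw [hceq, fNU]; exact min_le_left _ _
    have hc2 : C.factorization p + A.factorization p ≤ U.factorization p := by
      rw [hceq, fNU]; exact min_le_right _ _
    have hc3 : C.factorization p + A.factorization p = N.factorization p ∨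
        C.factorization p + A.factorization p = U.factorization p := by
      rw [hceq, fNU]; exact min_choice _ _
    have hfAMU : A.factorization p ≤ (Nat.gcd M U).factorization p := by
      rw [fMU]; exact le_min (le_trans ha1 hvG1) ha2
    have hdeq : D.factorization p + A.factorization p = (Nat.gcd M U).factorization p := by
      rw [fD]; exact Nat.sub_add_cancel hfAMU
    have hd1 : D.factorization p + A.factorization p ≤ M.factorization p := by
      rw [hdeq, fMU]; exact min_le_left _ _
    have hd2 : D.factorization p + A.factorization p ≤ U.factorization p := by
      rw [hdeq, fMU]; exact min_le_right _ _
    have hd3 : D.factorization p + A.factorization p = M.factorization p ∨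
        D.factorization p + A.factorization p = U.factorization p := by
      rw [hdeq, fMU]; exact min_choice _ _
    have hle3 : (x 5).natAbs.factorization p
        ≤ (x 3).natAbs.factorization p + (x 6).natAbs.factorization p :=
      le_trans (Nat.le_add_left _ _) hLa.le
    have hle4 : (x 5).natAbs.factorization p
        ≤ (x 4).natAbs.factorization p + (x 6).natAbs.factorization p :=
      le_trans (Nat.le_add_left _ _) hLb.le
    have hle0 : (x 5).natAbs.factorization p
        ≤ (x 3).natAbs.factorization p + (x 4).natAbs.factorization p :=
      le_trans (Nat.le_add_left _ _) hLc.le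
    exact core_val _ _ _ _ _ _ _ _ _ _ _ _ _ _ _ _ hvE1 hvE2 hvE3 hvP1 hvP2 hvP3
      hvQ1 hvQ2 hvQ3 hvM hvN hvu hvG1 hvG2 hvG3 ha1 ha2 ha3 hb hc1 hc2 hc3
      hd1 hd2 hd3 hle3 hle4 hle0 hQ4' hm hPP
  -- global multiplicative structure
  have habs : ∀ (i j k l : ℕ), A^i * B^j * C^k * D^l ≠ 0 := fun i j k l =>
    mul_ne_zero (mul_ne_zero (mul_ne_zero (pow_ne_zero _ hA0) (pow_ne_zero _ hB0))
      (pow_ne_zero _ hC0)) (pow_ne_zero _ hD0)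
  have hfprod : ∀ (i j k l p : ℕ), (A^i * B^j * C^k * D^l).factorization p
      = i * A.factorization p + j * B.factorization p + k * C.factorization p
        + l * D.factorization p := by
    intro i j k l p
    rw [fact_mul_apply (mul_ne_zero (mul_ne_zero (pow_ne_zero _ hA0) (pow_ne_zero _ hB0))
        (pow_ne_zero _ hC0)) (pow_ne_zero _ hD0),
      fact_mul_apply (mul_ne_zero (pow_ne_zero _ hA0) (pow_ne_zero _ hB0)) (pow_ne_zero _ hC0),
      fact_mul_apply (pow_ne_zero _ hA0) (pow_ne_zero _ hB0),
      fact_pow_apply, fact_pow_apply, fact_pow_apply, fact_pow_apply]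
  have hT5 : (x 5).natAbs = A^4 * B^2 * C^3 * D^3 := by
    apply fact_eq_nat (hnzn 5) (habs 4 2 3 3)
    intro p pp
    rw [hfprod]
    exact (key p pp).1
  have hTE : E = A^3 * B^2 * C^2 * D^2 := by
    apply fact_eq_nat hE0 (habs 3 2 2 2)
    intro p pp
    rw [hfprod]
    exact (key p pp).2.1
  have hTP : P = A^2 * B^1 * C^2 * D^1 := by
    apply fact_eq_nat hP0 (habs 2 1 2 1)
    intro p pp
    rw [hfprod]
    have := (key p pp).2.2.1
    omega
  have hTQ : Q = A^2 * B^1 * C^1 * D^2 := by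
    apply fact_eq_nat hQ0 (habs 2 1 1 2)
    intro p pp
    rw [hfprod]
    have := (key p pp).2.2.2.1
    omega
  -- integral points
  have hEdvd : ((E : ℕ) : ℤ) ∣ x 6 := Int.natCast_dvd.mpr hE6
  have hPdvd : ((P : ℕ) : ℤ) ∣ x 3 := Int.natCast_dvd.mpr hP3
  have hQdvd : ((Q : ℕ) : ℤ) ∣ x 4 := Int.natCast_dvd.mpr hQ4
  set α1 : ℤ := x 6 / (E : ℤ) with hα1_def
  set α2 : ℤ := x 3 / (P : ℤ) with hα2_def
  set α3 : ℤ := x 4 / (Q : ℤ) with hα3_def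
  have hx6 : x 6 = (E : ℤ) * α1 := (Int.mul_ediv_cancel' hEdvd).symm
  have hx3 : x 3 = (P : ℤ) * α2 := (Int.mul_ediv_cancel' hPdvd).symm
  have hx4 : x 4 = (Q : ℤ) * α3 := (Int.mul_ediv_cancel' hQdvd).symm
  have hx5 : ((x 5).natAbs : ℤ) = x 5 := Int.natAbs_of_nonneg h5.le
  have hα1nz : α1 ≠ 0 := fun h => hnz 6 (by rw [hx6, h, mul_zero])
  have hα2nz : α2 ≠ 0 := fun h => hnz 3 (by rw [hx3, h, mul_zero])
  have hα3nz : α3 ≠ 0 := fun h => hnz 4 (by rw [hx4, h, mul_zero])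
  have hα1abs : α1.natAbs = (x 6).natAbs / E := by
    have h1 : (x 6).natAbs = E * α1.natAbs := by
      rw [hx6, Int.natAbs_mul, Int.natAbs_natCast]
    rw [h1, Nat.mul_div_cancel_left _ (Nat.pos_of_ne_zero hE0)]
  have hα2abs : α2.natAbs = (x 3).natAbs / P := by
    have h1 : (x 3).natAbs = P * α2.natAbs := by
      rw [hx3, Int.natAbs_mul, Int.natAbs_natCast]
    rw [h1, Nat.mul_div_cancel_left _ (Nat.pos_of_ne_zero hP0)]
  have hα3abs : α3.natAbs = (x 4).natAbs / Q := by
    have h1 : (x 4).natAbs = Q * α3.natAbs := by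
      rw [hx4, Int.natAbs_mul, Int.natAbs_natCast]
    rw [h1, Nat.mul_div_cancel_left _ (Nat.pos_of_ne_zero hQ0)]
  have hdiv6nz : (x 6).natAbs / E ≠ 0 := by rw [← hα1abs]; exact Int.natAbs_ne_zero.mpr hα1nz
  have hdiv3nz : (x 3).natAbs / P ≠ 0 := by rw [← hα2abs]; exact Int.natAbs_ne_zero.mpr hα2nz
  have hdiv4nz : (x 4).natAbs / Q ≠ 0 := by rw [← hα3abs]; exact Int.natAbs_ne_zero.mpr hα3nz
  -- coprimality facts
  have hcop1 : Nat.gcd ((x 6).natAbs / E) (A * C * D) = 1 := by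
    apply fact_coprime hdiv6nz (mul_ne_zero (mul_ne_zero hA0 hC0) hD0)
    intro p pp
    rcases (key p pp).2.2.2.2.1 with h | h
    · left; rw [fact_div_apply hE6 p, h, Nat.sub_self]
    · right; rw [fact_mul_apply (mul_ne_zero hA0 hC0) hD0 p, fact_mul_apply hA0 hC0 p]; omega
  have hcop2 : Nat.gcd ((x 3).natAbs / P) (A * B * D) = 1 := by
    apply fact_coprime hdiv3nz (mul_ne_zero (mul_ne_zero hA0 hB0) hD0)
    intro p pp
    rcases (key p pp).2.2.2.2.2.1 with h | h
    · left; rw [fact_div_apply hP3 p, h, Nat.sub_self]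
    · right; rw [fact_mul_apply (mul_ne_zero hA0 hB0) hD0 p, fact_mul_apply hA0 hB0 p]; omega
  have hcop3 : Nat.gcd ((x 4).natAbs / Q) (A * B * C) = 1 := by
    apply fact_coprime hdiv4nz (mul_ne_zero (mul_ne_zero hA0 hB0) hC0)
    intro p pp
    rcases (key p pp).2.2.2.2.2.2.1 with h | h
    · left; rw [fact_div_apply hQ4 p, h, Nat.sub_self]
    · right; rw [fact_mul_apply (mul_ne_zero hA0 hB0) hC0 p, fact_mul_apply hA0 hB0 p]; omega
  have hcopBC : Nat.gcd B C = 1 := by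
    apply fact_coprime hB0 hC0
    intro p pp
    exact (key p pp).2.2.2.2.2.2.2.1
  have hcopBD : Nat.gcd B D = 1 := by
    apply fact_coprime hB0 hD0
    intro p pp
    exact (key p pp).2.2.2.2.2.2.2.2.1
  have hcopCD : Nat.gcd C D = 1 := by
    apply fact_coprime hC0 hD0
    intro p pp
    exact (key p pp).2.2.2.2.2.2.2.2.2
  -- cast identities
  have hcA : ((A : ℕ) : ℤ) ≠ 0 := Int.natCast_ne_zero.mpr hA0
  have hcB : ((B : ℕ) : ℤ) ≠ 0 := Int.natCast_ne_zero.mpr hB0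
  have hcC : ((C : ℕ) : ℤ) ≠ 0 := Int.natCast_ne_zero.mpr hC0
  have hcD : ((D : ℕ) : ℤ) ≠ 0 := Int.natCast_ne_zero.mpr hD0
  have hzE : ((E : ℕ) : ℤ) = (A:ℤ)^3 * (B:ℤ)^2 * (C:ℤ)^2 * (D:ℤ)^2 := by
    rw [hTE]; push_cast; ring
  have hzP : ((P : ℕ) : ℤ) = (A:ℤ)^2 * (B:ℤ) * (C:ℤ)^2 * (D:ℤ) := by
    rw [hTP]; push_cast; ring
  have hzQ : ((Q : ℕ) : ℤ) = (A:ℤ)^2 * (B:ℤ) * (C:ℤ) * (D:ℤ)^2 := by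
    rw [hTQ]; push_cast; ring
  have hz5 : x 5 = (A:ℤ)^4 * (B:ℤ)^2 * (C:ℤ)^3 * (D:ℤ)^3 := by
    rw [← hx5, hT5]; push_cast; ring
  -- the seven components
  have comp0 : α2 * α3 = x 0 := by
    apply mul_right_cancel₀ (hnz 5)
    have hq8 : x 0 * x 5 = x 3 * x 4 := by linarith
    rw [hq8, hx3, hx4, hzP, hzQ, hz5]; ring
  have comp1 : (A:ℤ) * B * C * α1 * α2 = x 1 := by
    apply mul_right_cancel₀ (hnz 5)
    have hq6 : x 1 * x 5 = x 3 * x 6 := by linarith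
    rw [hq6, hx3, hx6, hzP, hzE, hz5]; ring
  have comp2 : (A:ℤ) * B * D * α1 * α3 = x 2 := by
    apply mul_right_cancel₀ (hnz 5)
    have hq5 : x 2 * x 5 = x 4 * x 6 := by linarith
    rw [hq5, hx4, hx6, hzQ, hzE, hz5]; ring
  have comp3 : (A:ℤ)^2 * B * C^2 * D * α2 = x 3 := by rw [hx3, hzP]
  have comp4 : (A:ℤ)^2 * B * C * D^2 * α3 = x 4 := by rw [hx4, hzQ]
  have comp6 : (A:ℤ)^3 * B^2 * C^2 * D^2 * α1 = x 6 := by rw [hx6, hzE]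
  -- the torsor equation
  have heqn : (B:ℤ) * α1 ^ 2 + (C:ℤ) * α2 + (D:ℤ) * α3 = 0 := by
    have hfac : ((A:ℤ)^6 * (B:ℤ)^3 * (C:ℤ)^4 * (D:ℤ)^4) *
        ((B:ℤ) * α1 ^ 2 + (C:ℤ) * α2 + (D:ℤ) * α3) = 0 := by
      calc ((A:ℤ)^6 * (B:ℤ)^3 * (C:ℤ)^4 * (D:ℤ)^4) *
          ((B:ℤ) * α1 ^ 2 + (C:ℤ) * α2 + (D:ℤ) * α3)
          = x 3 * x 5 + x 4 * x 5 + x 6 ^ 2 := by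
            rw [hx3, hx4, hx6, hzP, hzQ, hzE, hz5]; ring
        _ = 0 := q4
    have hfne : ((A:ℤ)^6 * (B:ℤ)^3 * (C:ℤ)^4 * (D:ℤ)^4) ≠ 0 :=
      mul_ne_zero (mul_ne_zero (mul_ne_zero (pow_ne_zero _ hcA) (pow_ne_zero _ hcB))
        (pow_ne_zero _ hcC)) (pow_ne_zero _ hcD)
    exact (mul_eq_zero.mp hfac).resolve_left hfne
  -- the gcd conditions at the integer level
  have g1 : Int.gcd α1 ((A:ℤ) * (C:ℤ) * (D:ℤ)) = 1 := by
    rw [Int.gcd_def, hα1abs]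
    have : ((A:ℤ) * (C:ℤ) * (D:ℤ)).natAbs = A * C * D := by
      rw [Int.natAbs_mul, Int.natAbs_mul]; simp
    rw [this]; exact hcop1
  have g2 : Int.gcd α2 ((A:ℤ) * (B:ℤ) * (D:ℤ)) = 1 := by
    rw [Int.gcd_def, hα2abs]
    have : ((A:ℤ) * (B:ℤ) * (D:ℤ)).natAbs = A * B * D := by
      rw [Int.natAbs_mul, Int.natAbs_mul]; simp
    rw [this]; exact hcop2
  have g3 : Int.gcd α3 ((A:ℤ) * (B:ℤ) * (C:ℤ)) = 1 := by
    rw [Int.gcd_def, hα3abs]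
    have : ((A:ℤ) * (B:ℤ) * (C:ℤ)).natAbs = A * B * C := by
      rw [Int.natAbs_mul, Int.natAbs_mul]; simp
    rw [this]; exact hcop3
  have gBC : Int.gcd (B:ℤ) (C:ℤ) = 1 := by rw [Int.gcd_def]; simpa using hcopBC
  have gBD : Int.gcd (B:ℤ) (D:ℤ) = 1 := by rw [Int.gcd_def]; simpa using hcopBD
  have gCD : Int.gcd (C:ℤ) (D:ℤ) = 1 := by rw [Int.gcd_def]; simpa using hcopCD
  have pA : (0:ℤ) < (A:ℤ) := by exact_mod_cast Nat.pos_of_ne_zero hA0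
  have pB : (0:ℤ) < (B:ℤ) := by exact_mod_cast Nat.pos_of_ne_zero hB0
  have pC : (0:ℤ) < (C:ℤ) := by exact_mod_cast Nat.pos_of_ne_zero hC0
  have pD : (0:ℤ) < (D:ℤ) := by exact_mod_cast Nat.pos_of_ne_zero hD0
  have hprodnz : α1 * α2 * α3 ≠ 0 := mul_ne_zero (mul_ne_zero hα1nz hα2nz) hα3nz
  have hmap : torsorMap (A:ℤ) (B:ℤ) (C:ℤ) (D:ℤ) α1 α2 α3 = x := by
    funext i
    fin_cases i
    · exact comp0
    · exact comp1
    · exact comp2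
    · exact comp3
    · exact comp4
    · exact hz5.symm
    · exact comp6
  refine ⟨((A:ℤ), (B:ℤ), (C:ℤ), (D:ℤ), α1, α2, α3),
    ⟨heqn, g1, g2, g3, gBC, gBD, gCD, pA, pB, pC, pD, hprodnz, hmap⟩, ?_⟩
  rintro ⟨η1, η2, η3, η4, b1, b2, b3⟩
    ⟨ueq, ug1, ug2, ug3, uBC, uBD, uCD, up1, up2, up3, up4, unz, umap⟩
  have t3 : η1^2 * η2 * η3^2 * η4 * b2 = x 3 := congrFun umap 3
  have t4 : η1^2 * η2 * η3 * η4^2 * b3 = x 4 := congrFun umap 4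
  have t5 : η1^4 * η2^2 * η3^3 * η4^3 = x 5 := congrFun umap 5
  have t6 : η1^3 * η2^2 * η3^2 * η4^2 * b1 = x 6 := congrFun umap 6
  have hKpos : (0:ℤ) < η1^3 * η2^2 * η3^2 * η4^2 := by positivity
  have hKnz : (η1^3 * η2^2 * η3^2 * η4^2 : ℤ) ≠ 0 := hKpos.ne'
  have hx5K : x 5 = (η1^3 * η2^2 * η3^2 * η4^2) * (η1 * η3 * η4) := by rw [← t5]; ring
  have hx6K : x 6 = (η1^3 * η2^2 * η3^2 * η4^2) * b1 := by rw [← t6]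
  have hgcdE : Int.gcd (x 5) (x 6) = E := by
    rw [Int.gcd_def]
  have u1 : Int.gcd (η1 * η3 * η4) b1 = 1 := by rw [Int.gcd_comm]; exact ug1
  have hEK : ((E : ℕ) : ℤ) = η1^3 * η2^2 * η3^2 * η4^2 := by
    have h2 : Int.gcd (x 5) (x 6) = (η1^3 * η2^2 * η3^2 * η4^2).natAbs := by
      rw [hx5K, hx6K, Int.gcd_mul_left, u1, mul_one]
    calc ((E : ℕ) : ℤ) = ((Int.gcd (x 5) (x 6) : ℕ) : ℤ) := by rw [hgcdE]
      _ = (((η1^3 * η2^2 * η3^2 * η4^2).natAbs : ℕ) : ℤ) := by rw [h2]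
      _ = η1^3 * η2^2 * η3^2 * η4^2 := Int.natAbs_of_nonneg hKpos.le
  have hEz : ((E : ℕ) : ℤ) ≠ 0 := Int.natCast_ne_zero.mpr hE0
  have hb1 : b1 = α1 := by
    have hx6' : x 6 = ((E : ℕ) : ℤ) * b1 := by rw [hx6K, hEK]
    rw [hα1_def, hx6', Int.mul_ediv_cancel_left _ hEz]
  -- P
  have hPzpos : (0:ℤ) < η1^2 * η2 * η3^2 * η4 := by positivity
  have hgcdP : Int.gcd (x 3) ((E : ℕ) : ℤ) = P := by
    rw [Int.gcd_def, Int.natAbs_natCast]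
  have hx3K : x 3 = (η1^2 * η2 * η3^2 * η4) * b2 := by rw [← t3]
  have hEPK : ((E : ℕ) : ℤ) = (η1^2 * η2 * η3^2 * η4) * (η1 * η2 * η4) := by
    rw [hEK]; ring
  have hPK : ((P : ℕ) : ℤ) = η1^2 * η2 * η3^2 * η4 := by
    have h2 : Int.gcd (x 3) ((E : ℕ) : ℤ) = (η1^2 * η2 * η3^2 * η4).natAbs := by
      rw [hx3K, hEPK, Int.gcd_mul_left, ug2, mul_one]
    calc ((P : ℕ) : ℤ) = ((Int.gcd (x 3) ((E : ℕ) : ℤ) : ℕ) : ℤ) := by rw [hgcdP]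
      _ = (((η1^2 * η2 * η3^2 * η4).natAbs : ℕ) : ℤ) := by rw [h2]
      _ = η1^2 * η2 * η3^2 * η4 := Int.natAbs_of_nonneg hPzpos.le
  have hPz : ((P : ℕ) : ℤ) ≠ 0 := Int.natCast_ne_zero.mpr hP0
  have hb2 : b2 = α2 := by
    have hx3' : x 3 = ((P : ℕ) : ℤ) * b2 := by rw [hx3K, hPK]
    rw [hα2_def, hx3', Int.mul_ediv_cancel_left _ hPz]
  -- Q
  have hQzpos : (0:ℤ) < η1^2 * η2 * η3 * η4^2 := by positivity
  have hgcdQ : Int.gcd (x 4) ((E : ℕ) : ℤ) = Q := by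
    rw [Int.gcd_def, Int.natAbs_natCast]
  have hx4K : x 4 = (η1^2 * η2 * η3 * η4^2) * b3 := by rw [← t4]
  have hEQK : ((E : ℕ) : ℤ) = (η1^2 * η2 * η3 * η4^2) * (η1 * η2 * η3) := by
    rw [hEK]; ring
  have hQK : ((Q : ℕ) : ℤ) = η1^2 * η2 * η3 * η4^2 := by
    have h2 : Int.gcd (x 4) ((E : ℕ) : ℤ) = (η1^2 * η2 * η3 * η4^2).natAbs := by
      rw [hx4K, hEQK, Int.gcd_mul_left, ug3, mul_one]
    calc ((Q : ℕ) : ℤ) = ((Int.gcd (x 4) ((E : ℕ) : ℤ) : ℕ) : ℤ) := by rw [hgcdQ]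
      _ = (((η1^2 * η2 * η3 * η4^2).natAbs : ℕ) : ℤ) := by rw [h2]
      _ = η1^2 * η2 * η3 * η4^2 := Int.natAbs_of_nonneg hQzpos.le
  have hQz : ((Q : ℕ) : ℤ) ≠ 0 := Int.natCast_ne_zero.mpr hQ0
  have hb3 : b3 = α3 := by
    have hx4' : x 4 = ((Q : ℕ) : ℤ) * b3 := by rw [hx4K, hQK]
    rw [hα3_def, hx4', Int.mul_ediv_cancel_left _ hQz]
  -- M, N, U as integers
  have hPM : P * M = E := by rw [hM_def]; exact Nat.mul_div_cancel' hPE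
  have hMz : ((M : ℕ) : ℤ) = η1 * η2 * η4 := by
    have h1 : ((P : ℕ) : ℤ) * ((M : ℕ) : ℤ) = ((P : ℕ) : ℤ) * (η1 * η2 * η4) := by
      calc ((P : ℕ) : ℤ) * ((M : ℕ) : ℤ) = ((P * M : ℕ) : ℤ) := by push_cast; ring
        _ = ((E : ℕ) : ℤ) := by rw [hPM]
        _ = (η1^2 * η2 * η3^2 * η4) * (η1 * η2 * η4) := hEPK
        _ = ((P : ℕ) : ℤ) * (η1 * η2 * η4) := by rw [hPK]
    exact mul_left_cancel₀ hPz h1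
  have hQN : Q * N = E := by rw [hN_def]; exact Nat.mul_div_cancel' hQE
  have hNz : ((N : ℕ) : ℤ) = η1 * η2 * η3 := by
    have h1 : ((Q : ℕ) : ℤ) * ((N : ℕ) : ℤ) = ((Q : ℕ) : ℤ) * (η1 * η2 * η3) := by
      calc ((Q : ℕ) : ℤ) * ((N : ℕ) : ℤ) = ((Q * N : ℕ) : ℤ) := by push_cast; ring
        _ = ((E : ℕ) : ℤ) := by rw [hQN]
        _ = (η1^2 * η2 * η3 * η4^2) * (η1 * η2 * η3) := hEQK
        _ = ((Q : ℕ) : ℤ) * (η1 * η2 * η3) := by rw [hQK]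
    exact mul_left_cancel₀ hQz h1
  have hEU : E * U = (x 5).natAbs := by rw [hU_def]; exact Nat.mul_div_cancel' hE5
  have hUz : ((U : ℕ) : ℤ) = η1 * η3 * η4 := by
    have h1 : ((E : ℕ) : ℤ) * ((U : ℕ) : ℤ) = ((E : ℕ) : ℤ) * (η1 * η3 * η4) := by
      calc ((E : ℕ) : ℤ) * ((U : ℕ) : ℤ) = ((E * U : ℕ) : ℤ) := by push_cast; ring
        _ = (((x 5).natAbs : ℕ) : ℤ) := by rw [hEU]
        _ = x 5 := hx5
        _ = (η1^3 * η2^2 * η3^2 * η4^2) * (η1 * η3 * η4) := hx5K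
        _ = ((E : ℕ) : ℤ) * (η1 * η3 * η4) := by rw [hEK]
    exact mul_left_cancel₀ hEz h1
  -- G and the η's
  have hη12pos : (0:ℤ) < η1 * η2 := by positivity
  have hGz : ((G : ℕ) : ℤ) = η1 * η2 := by
    have hgcdG : Int.gcd ((M : ℕ) : ℤ) ((N : ℕ) : ℤ) = G := by
      rw [Int.gcd_def, Int.natAbs_natCast, Int.natAbs_natCast]
    have hM' : ((M : ℕ) : ℤ) = (η1 * η2) * η4 := by rw [hMz]
    have hN' : ((N : ℕ) : ℤ) = (η1 * η2) * η3 := by rw [hNz]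
    have u43 : Int.gcd (η4 : ℤ) (η3 : ℤ) = 1 := by rw [Int.gcd_comm]; exact uCD
    have h2 : Int.gcd ((M : ℕ) : ℤ) ((N : ℕ) : ℤ) = (η1 * η2).natAbs := by
      rw [hM', hN', Int.gcd_mul_left, u43, mul_one]
    calc ((G : ℕ) : ℤ) = ((Int.gcd ((M : ℕ) : ℤ) ((N : ℕ) : ℤ) : ℕ) : ℤ) := by rw [hgcdG]
      _ = (((η1 * η2).natAbs : ℕ) : ℤ) := by rw [h2]
      _ = η1 * η2 := Int.natAbs_of_nonneg hη12pos.le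
  have u234 : Int.gcd (η2 : ℤ) (η3 * η4 : ℤ) = 1 := by
    have h := Nat.Coprime.mul_right (uBC : Nat.Coprime η2.natAbs η3.natAbs)
      (uBD : Nat.Coprime η2.natAbs η4.natAbs)
    rw [Int.gcd_def, Int.natAbs_mul]
    exact h
  have hAz : ((A : ℕ) : ℤ) = η1 := by
    have hgcdA : Int.gcd ((G : ℕ) : ℤ) ((U : ℕ) : ℤ) = A := by
      rw [Int.gcd_def, Int.natAbs_natCast, Int.natAbs_natCast]
    have hU' : ((U : ℕ) : ℤ) = η1 * (η3 * η4) := by rw [hUz]; ring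
    have h2 : Int.gcd ((G : ℕ) : ℤ) ((U : ℕ) : ℤ) = η1.natAbs := by
      rw [hGz, hU', Int.gcd_mul_left, u234, mul_one]
    calc ((A : ℕ) : ℤ) = ((Int.gcd ((G : ℕ) : ℤ) ((U : ℕ) : ℤ) : ℕ) : ℤ) := by rw [hgcdA]
      _ = ((η1.natAbs : ℕ) : ℤ) := by rw [h2]
      _ = η1 := Int.natAbs_of_nonneg up1.le
  have hAz' : ((A : ℕ) : ℤ) ≠ 0 := hcA
  have hABG : A * B = G := by rw [hB_def]; exact Nat.mul_div_cancel' hAG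
  have hBz : ((B : ℕ) : ℤ) = η2 := by
    have h1 : ((A : ℕ) : ℤ) * ((B : ℕ) : ℤ) = ((A : ℕ) : ℤ) * η2 := by
      calc ((A : ℕ) : ℤ) * ((B : ℕ) : ℤ) = ((A * B : ℕ) : ℤ) := by push_cast; ring
        _ = ((G : ℕ) : ℤ) := by rw [hABG]
        _ = η1 * η2 := hGz
        _ = ((A : ℕ) : ℤ) * η2 := by rw [hAz]
    exact mul_left_cancel₀ hAz' h1
  have hη13pos : (0:ℤ) < η1 * η3 := by positivity
  have hgcdNUz : ((Nat.gcd N U : ℕ) : ℤ) = η1 * η3 := by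
    have hgcdNU : Int.gcd ((N : ℕ) : ℤ) ((U : ℕ) : ℤ) = Nat.gcd N U := by
      rw [Int.gcd_def, Int.natAbs_natCast, Int.natAbs_natCast]
    have hN'' : ((N : ℕ) : ℤ) = (η1 * η3) * η2 := by rw [hNz]; ring
    have hU'' : ((U : ℕ) : ℤ) = (η1 * η3) * η4 := by rw [hUz]
    have h2 : Int.gcd ((N : ℕ) : ℤ) ((U : ℕ) : ℤ) = (η1 * η3).natAbs := by
      rw [hN'', hU'', Int.gcd_mul_left, uBD, mul_one]
    calc ((Nat.gcd N U : ℕ) : ℤ) = ((Int.gcd ((N : ℕ) : ℤ) ((U : ℕ) : ℤ) : ℕ) : ℤ) := by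
          rw [hgcdNU]
      _ = (((η1 * η3).natAbs : ℕ) : ℤ) := by rw [h2]
      _ = η1 * η3 := Int.natAbs_of_nonneg hη13pos.le
  have hACNU : A * C = Nat.gcd N U := by rw [hC_def]; exact Nat.mul_div_cancel' hANU
  have hCz : ((C : ℕ) : ℤ) = η3 := by
    have h1 : ((A : ℕ) : ℤ) * ((C : ℕ) : ℤ) = ((A : ℕ) : ℤ) * η3 := by
      calc ((A : ℕ) : ℤ) * ((C : ℕ) : ℤ) = ((A * C : ℕ) : ℤ) := by push_cast; ring
        _ = ((Nat.gcd N U : ℕ) : ℤ) := by rw [hACNU]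
        _ = η1 * η3 := hgcdNUz
        _ = ((A : ℕ) : ℤ) * η3 := by rw [hAz]
    exact mul_left_cancel₀ hAz' h1
  have hη14pos : (0:ℤ) < η1 * η4 := by positivity
  have hgcdMUz : ((Nat.gcd M U : ℕ) : ℤ) = η1 * η4 := by
    have hgcdMU : Int.gcd ((M : ℕ) : ℤ) ((U : ℕ) : ℤ) = Nat.gcd M U := by
      rw [Int.gcd_def, Int.natAbs_natCast, Int.natAbs_natCast]
    have hM'' : ((M : ℕ) : ℤ) = (η1 * η4) * η2 := by rw [hMz]; ring
    have hU'' : ((U : ℕ) : ℤ) = (η1 * η4) * η3 := by rw [hUz]; ring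
    have h2 : Int.gcd ((M : ℕ) : ℤ) ((U : ℕ) : ℤ) = (η1 * η4).natAbs := by
      rw [hM'', hU'', Int.gcd_mul_left, uBC, mul_one]
    calc ((Nat.gcd M U : ℕ) : ℤ) = ((Int.gcd ((M : ℕ) : ℤ) ((U : ℕ) : ℤ) : ℕ) : ℤ) := by
          rw [hgcdMU]
      _ = (((η1 * η4).natAbs : ℕ) : ℤ) := by rw [h2]
      _ = η1 * η4 := Int.natAbs_of_nonneg hη14pos.le
  have hADMU : A * D = Nat.gcd M U := by rw [hD_def]; exact Nat.mul_div_cancel' hAMU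
  have hDz : ((D : ℕ) : ℤ) = η4 := by
    have h1 : ((A : ℕ) : ℤ) * ((D : ℕ) : ℤ) = ((A : ℕ) : ℤ) * η4 := by
      calc ((A : ℕ) : ℤ) * ((D : ℕ) : ℤ) = ((A * D : ℕ) : ℤ) := by push_cast; ring
        _ = ((Nat.gcd M U : ℕ) : ℤ) := by rw [hADMU]
        _ = η1 * η4 := hgcdMUz
        _ = ((A : ℕ) : ℤ) * η4 := by rw [hAz]
    exact mul_left_cancel₀ hAz' h1
  simp only [Prod.mk.injEq]
  exact ⟨hAz.symm, hBz.symm, hCz.symm, hDz.symm, hb1, hb2, hb3⟩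
end
end

section
/- For all real u > 0, F2(u) ≤ 4/√u. -/
open MeasureTheory

noncomputable section

lemma F1_nonneg (u v : ℝ) : 0 ≤ F1 u v := ENNReal.toReal_nonneg

lemma F1_le (u v : ℝ) (hu : 0 < u) : F1 u v ≤ 2 * Real.sqrt (2 / u) := by
  set c := v ^ 2 / (2 * u) with hc
  set d := v ^ 4 / (4 * u) with hd
  have hd0 : 0 ≤ d := by positivity
  set a := Real.sqrt (max 0 (d - 1) / u) with ha
  set b := Real.sqrt ((d + 1) / u) with hb
  have ha0 : 0 ≤ a := Real.sqrt_nonneg _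
  have hb0 : 0 ≤ b := Real.sqrt_nonneg _
  have hab : a ≤ b := by
    apply Real.sqrt_le_sqrt
    gcongr
    exact max_le (by linarith) (by linarith)
  have hsub : {t : ℝ |
    0 < |t * (u * t + v ^ 2)| ∧ |t * (u * t + v ^ 2)| ≤ 1 ∧
    |u * v * t| ≤ 1 ∧ |u * v * t + v ^ 3| ≤ 1 ∧
    |u ^ 2 * t| ≤ 1 ∧ |u ^ 2 * t + u * v ^ 2| ≤ 1} ⊆
      Set.Icc (-c - b) (-c - a) ∪ Set.Icc (-c + a) (-c + b) := by
    intro t ht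
    have h1 : |t * (u * t + v ^ 2)| ≤ 1 := ht.2.1
    have key : t * (u * t + v ^ 2) = u * (t + c) ^ 2 - d := by
      rw [hc, hd]; field_simp; ring
    rw [key, abs_le] at h1
    have hmax : max 0 (d - 1) ≤ u * (t + c) ^ 2 := by
      refine max_le (by positivity) (by linarith [h1.1])
    have h2' : max 0 (d - 1) / u ≤ (t + c) ^ 2 := by
      rw [div_le_iff₀ hu]; nlinarith
    have h3' : (t + c) ^ 2 ≤ (d + 1) / u := by
      rw [le_div_iff₀ hu]; nlinarith [h1.2]
    have hla : a ≤ |t + c| := by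
      rw [ha, ← Real.sqrt_sq_eq_abs]
      exact Real.sqrt_le_sqrt h2'
    have hlb : |t + c| ≤ b := by
      rw [hb, ← Real.sqrt_sq_eq_abs]
      exact Real.sqrt_le_sqrt h3'
    rcases le_or_gt 0 (t + c) with h | h
    · right
      rw [abs_of_nonneg h] at hla hlb
      exact ⟨by linarith, by linarith⟩
    · left
      rw [abs_of_neg h] at hla hlb
      exact ⟨by linarith, by linarith⟩
  have hvol : volume (Set.Icc (-c - b) (-c - a) ∪ Set.Icc (-c + a) (-c + b)) ≤
      ENNReal.ofReal (b - a) + ENNReal.ofReal (b - a) := by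
    refine (measure_union_le _ _).trans ?_
    rw [Real.volume_Icc, Real.volume_Icc]
    apply add_le_add <;> apply ENNReal.ofReal_le_ofReal <;> linarith
  have hba : b - a ≤ Real.sqrt (2 / u) := by
    have h1 : (b - a) ^ 2 ≤ b ^ 2 - a ^ 2 := by nlinarith
    have hb2 : b ^ 2 = (d + 1) / u := Real.sq_sqrt (by positivity)
    have ha2 : a ^ 2 = max 0 (d - 1) / u := Real.sq_sqrt (by positivity)
    have h2 : b ^ 2 - a ^ 2 ≤ 2 / u := by
      rw [hb2, ha2, div_sub_div_same, div_le_div_iff₀ hu hu]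
      rcases le_total (d - 1) 0 with h | h
      · rw [max_eq_left h]; nlinarith
      · rw [max_eq_right h]; nlinarith
    exact Real.le_sqrt_of_sq_le (by nlinarith)
  calc F1 u v ≤ (ENNReal.ofReal (b - a) + ENNReal.ofReal (b - a)).toReal := by
        apply ENNReal.toReal_mono (by finiteness)
        exact (measure_mono hsub).trans hvol
    _ = (b - a) + (b - a) := by
        rw [ENNReal.toReal_add (by finiteness) (by finiteness),
          ENNReal.toReal_ofReal (by linarith)]
    _ ≤ 2 * Real.sqrt (2 / u) := by linarith

lemma F1_zero (u v : ℝ) (hv : (1.3 : ℝ) < v) : F1 u v = 0 := by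
  have : {t : ℝ |
    0 < |t * (u * t + v ^ 2)| ∧ |t * (u * t + v ^ 2)| ≤ 1 ∧
    |u * v * t| ≤ 1 ∧ |u * v * t + v ^ 3| ≤ 1 ∧
    |u ^ 2 * t| ≤ 1 ∧ |u ^ 2 * t + u * v ^ 2| ≤ 1} = ∅ := by
    ext t
    simp only [Set.mem_setOf_eq, Set.mem_empty_iff_false, iff_false, not_and]
    intro _ _ h2 h3
    exfalso
    have hv3 : (2 : ℝ) < v ^ 3 := by nlinarith
    have h2' := abs_le.mp h2
    have h3' := abs_le.mp h3
    nlinarith [h2'.1, h2'.2, h3'.1, h3'.2]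
  rw [F1, this, measure_empty, ENNReal.toReal_zero]

theorem F2_le (u : ℝ) (hu : 0 < u) : F2 u ≤ 4 / Real.sqrt u := by
  have hsu : 0 < Real.sqrt u := Real.sqrt_pos.mpr hu
  have hrhs : (0:ℝ) ≤ 4 / Real.sqrt u := by positivity
  set C := 2 * Real.sqrt (2 / u) with hC
  have hC0 : 0 ≤ C := by positivity
  have hkey : C * 1.3 ≤ 4 / Real.sqrt u := by
    have h2 : Real.sqrt 2 ≤ 20 / 13 := by
      rw [show (20:ℝ)/13 = Real.sqrt ((20/13)^2) by rw [Real.sqrt_sq (by norm_num)]]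
      exact Real.sqrt_le_sqrt (by norm_num)
    rw [hC, Real.sqrt_div (by norm_num : (0:ℝ) ≤ 2) u,
      show 2 * (Real.sqrt 2 / Real.sqrt u) * 1.3 = 2 * Real.sqrt 2 * 1.3 / Real.sqrt u from by ring]
    gcongr
    nlinarith [Real.sqrt_nonneg 2]
  have hbound : ∀ x ∈ Set.uIoc (0:ℝ) 1.3, ‖F1 u x‖ ≤ C := by
    intro x _
    rw [Real.norm_eq_abs, abs_of_nonneg (F1_nonneg u x)]
    exact F1_le u x hu
  set L := 1 / u ^ 2 with hL
  have hL0 : 0 < L := by positivity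
  by_cases hInt : IntervalIntegrable (F1 u) volume 0 L
  · rcases le_or_gt L 1.3 with hL13 | hL13
    · have hb2 : ∀ x ∈ Set.uIoc (0:ℝ) L, ‖F1 u x‖ ≤ C := by
        intro x _
        rw [Real.norm_eq_abs, abs_of_nonneg (F1_nonneg u x)]
        exact F1_le u x hu
      have := intervalIntegral.norm_integral_le_of_norm_le_const hb2
      have h2 : F2 u ≤ C * |L - 0| := le_trans (le_abs_self _) (by rwa [Real.norm_eq_abs] at this)
      calc F2 u ≤ C * |L - 0| := h2
        _ = C * L := by rw [sub_zero, abs_of_pos hL0]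
        _ ≤ C * 1.3 := by nlinarith
        _ ≤ 4 / Real.sqrt u := hkey
    · have hI1 : IntervalIntegrable (F1 u) volume 0 1.3 := by
        apply hInt.mono_set
        rw [Set.uIcc_of_le (by norm_num : (0:ℝ) ≤ 1.3), Set.uIcc_of_le hL0.le]
        exact Set.Icc_subset_Icc le_rfl (by linarith)
      have hI2 : IntervalIntegrable (F1 u) volume 1.3 L := by
        apply hInt.mono_set
        rw [Set.uIcc_of_le (by linarith : (1.3:ℝ) ≤ L), Set.uIcc_of_le hL0.le]
        exact Set.Icc_subset_Icc (by norm_num) le_rfl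
      have hsplit : F2 u = (∫ v in (0:ℝ)..1.3, F1 u v) + ∫ v in (1.3:ℝ)..L, F1 u v := by
        rw [F2, ← intervalIntegral.integral_add_adjacent_intervals hI1 hI2]
      have hz : (∫ v in (1.3:ℝ)..L, F1 u v) = 0 := by
        rw [intervalIntegral.integral_of_le (by linarith)]
        apply MeasureTheory.setIntegral_eq_zero_of_forall_eq_zero
        intro x hx
        exact F1_zero u x hx.1
      have h1 : (∫ v in (0:ℝ)..1.3, F1 u v) ≤ C * 1.3 := by
        have := intervalIntegral.norm_integral_le_of_norm_le_const hbound
        calc (∫ v in (0:ℝ)..1.3, F1 u v) ≤ ‖∫ v in (0:ℝ)..1.3, F1 u v‖ := le_abs_self _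
          _ ≤ C * |(1.3:ℝ) - 0| := this
          _ = C * 1.3 := by norm_num
      rw [hsplit, hz, add_zero]
      exact h1.trans hkey
  · rw [F2, intervalIntegral.integral_undef hInt]
    exact hrhs
end
end

section
/- For all real numbers u > 0 and δ > 0, the difference between the sum ∑_{n ∈ ℤ, 0 < n ≤ 1/(δu²)} F1(u, nδ) and the quantity F2(u)/δ has absolute value at most 6/√u. -/
open MeasureTheory

noncomputable section

/-!
For `v > 0`, write `c = v² / (2u)`. Completing the square, `t (u t + v²) = u ((t + c)² - c²)`,
and each pair of box constraints `|x - y| ≤ 1, |x + y| ≤ 1` (with `y ≥ 0`) says `|x| + y ≤ 1`.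
So, up to the two roots of `t (u t + v²)`, the set defining `F1 u v` is the symmetric annulus
`innerRadius ≤ |t + c| ≤ min boxRadius outerRadius`, and `F1 u v` is twice the (nonnegative part
of the) difference of the radii. The box radius decreases in `v`, the outer radius increases, and
the inner radius vanishes up to `peak u`, after which `outerRadius - innerRadius` decreases.
Hence `F1 u ·` is unimodal on `(0, ∞)`, with its peak where the box and outer radii cross (located
by the intermediate value theorem), and bounded by `M = 2 √(2/u)`.

For a function `g` with values in `[0, M]`, increasing on `(0, p]` and decreasing on `(p, ∞)`,
each sample `g n` lies between the integrals of `g` over the two unit cells adjacent to `n` whenever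
both cells are on one side of `p`. Pairing samples with cells accordingly leaves, in either
direction, at most two unmatched terms (the cell containing `p`, a sample next to it, or the final
partial cell), each at most `M`. So the Riemann sum with mesh `δ` is within `2 M` of the integral
divided by `δ`, and `2 · 2 √(2/u) ≤ 6 / √u`.
-/

open Set

section UnitMesh

variable {g : ℝ → ℝ} {M p : ℝ}

lemma Measurable.intervalIntegrable_of_nonneg_of_le (hg : Measurable g) (hg0 : ∀ x, 0 ≤ g x)
    (hgM : ∀ x, g x ≤ M) (a b : ℝ) : IntervalIntegrable g volume a b :=
  (intervalIntegrable_const (c := M)).mono_fun hg.aestronglyMeasurable <| ae_of_all _ fun x => by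
    simpa [abs_of_nonneg (hg0 x)] using (hgM x).trans (le_abs_self M)

lemma integral_unit_le_of_forall_le (hint : ∀ a b, IntervalIntegrable g volume a b) {a C : ℝ}
    (h : ∀ x ∈ Ioo a (a + 1), g x ≤ C) : ∫ x in a..a + 1, g x ≤ C := by
  simpa using intervalIntegral.integral_mono_on_of_le_Ioo (by linarith) (hint _ _)
    intervalIntegrable_const h

lemma le_integral_unit_of_forall_le (hint : ∀ a b, IntervalIntegrable g volume a b) {a C : ℝ}
    (h : ∀ x ∈ Ioo a (a + 1), C ≤ g x) : C ≤ ∫ x in a..a + 1, g x := by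
  simpa using intervalIntegral.integral_mono_on_of_le_Ioo (by linarith) intervalIntegrable_const
    (hint a (a + 1)) h

lemma MonotoneOn.le_integral_unit {s : Set ℝ} (hmono : MonotoneOn g s)
    (hint : ∀ a b, IntervalIntegrable g volume a b) {a : ℝ} (hs : Icc a (a + 1) ⊆ s) :
    g a ≤ ∫ x in a..a + 1, g x :=
  le_integral_unit_of_forall_le hint fun _ hx =>
    hmono (hs (left_mem_Icc.2 (by linarith))) (hs (Ioo_subset_Icc_self hx)) hx.1.le

lemma MonotoneOn.integral_unit_le {s : Set ℝ} (hmono : MonotoneOn g s)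
    (hint : ∀ a b, IntervalIntegrable g volume a b) {a : ℝ} (hs : Ioc a (a + 1) ⊆ s) :
    ∫ x in a..a + 1, g x ≤ g (a + 1) :=
  integral_unit_le_of_forall_le hint fun _ hx =>
    hmono (hs (Ioo_subset_Ioc_self hx)) (hs (right_mem_Ioc.2 (by linarith))) hx.2.le

lemma AntitoneOn.le_integral_unit {s : Set ℝ} (hanti : AntitoneOn g s)
    (hint : ∀ a b, IntervalIntegrable g volume a b) {a : ℝ} (hs : Ioc a (a + 1) ⊆ s) :
    g (a + 1) ≤ ∫ x in a..a + 1, g x :=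
  le_integral_unit_of_forall_le hint fun _ hx =>
    hanti (hs (Ioo_subset_Ioc_self hx)) (hs (right_mem_Ioc.2 (by linarith))) hx.2.le

lemma AntitoneOn.integral_unit_le {s : Set ℝ} (hanti : AntitoneOn g s)
    (hint : ∀ a b, IntervalIntegrable g volume a b) {a : ℝ} (hs : Icc a (a + 1) ⊆ s) :
    ∫ x in a..a + 1, g x ≤ g a :=
  integral_unit_le_of_forall_le hint fun _ hx =>
    hanti (hs (left_mem_Icc.2 (by linarith))) (hs (Ioo_subset_Icc_self hx)) hx.1.le

lemma integral_zero_natCast_succ (hint : ∀ a b, IntervalIntegrable g volume a b) (N : ℕ) :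
    ∫ x in (0 : ℝ)..↑(N + 1), g x = (∫ x in (0 : ℝ)..N, g x) + ∫ x in (N : ℝ)..N + 1, g x := by
  rw [intervalIntegral.integral_add_adjacent_intervals (hint _ _) (hint _ _)]
  push_cast
  rfl

lemma sum_le_integral_succ_of_monotoneOn (hint : ∀ a b, IntervalIntegrable g volume a b)
    (hg0 : ∀ x, 0 ≤ g x) (hmono : MonotoneOn g (Ioc 0 p)) {N : ℕ} (hN : (N : ℝ) + 1 ≤ p) :
    ∑ n ∈ Finset.Icc 1 N, g n ≤ ∫ x in (0 : ℝ)..↑(N + 1), g x := by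
  induction N with
  | zero => simpa using le_integral_unit_of_forall_le hint (a := 0) fun x _ => hg0 x
  | succ N ih =>
    rw [Finset.sum_Icc_succ_top (by omega), integral_zero_natCast_succ hint (N + 1)]
    push_cast at hN ih ⊢
    have hcell := hmono.le_integral_unit hint (a := N + 1)
      ((Icc_subset_Ioc_iff (by linarith)).2 ⟨by positivity, by linarith⟩)
    linarith [ih (by linarith)]

lemma sum_le_integral_add_of_monotoneOn (hint : ∀ a b, IntervalIntegrable g volume a b)
    (hg0 : ∀ x, 0 ≤ g x) (hgM : ∀ x, g x ≤ M) (hmono : MonotoneOn g (Ioc 0 p)) {N : ℕ}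
    (hN : (N : ℝ) ≤ p) : ∑ n ∈ Finset.Icc 1 N, g n ≤ (∫ x in (0 : ℝ)..N, g x) + M := by
  cases N with
  | zero => simpa using (hg0 0).trans (hgM 0)
  | succ N =>
    rw [Finset.sum_Icc_succ_top (by omega)]
    push_cast at hN
    linarith [sum_le_integral_succ_of_monotoneOn hint hg0 hmono hN, hgM ↑(N + 1)]

lemma integral_le_sum_of_monotoneOn (hint : ∀ a b, IntervalIntegrable g volume a b)
    (hmono : MonotoneOn g (Ioc 0 p)) {N : ℕ} (hN : (N : ℝ) ≤ p) :
    ∫ x in (0 : ℝ)..N, g x ≤ ∑ n ∈ Finset.Icc 1 N, g n := by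
  induction N with
  | zero => simp
  | succ N ih =>
    rw [Finset.sum_Icc_succ_top (by omega), integral_zero_natCast_succ hint N]
    push_cast at hN ⊢
    have hcell := hmono.integral_unit_le hint (a := N) (Ioc_subset_Ioc (by positivity) hN)
    linarith [ih (by linarith)]

lemma sum_le_integral_add_two_mul (hint : ∀ a b, IntervalIntegrable g volume a b)
    (hg0 : ∀ x, 0 ≤ g x) (hgM : ∀ x, g x ≤ M) (hmono : MonotoneOn g (Ioc 0 p))
    (hanti : AntitoneOn g (Ioi p)) (N : ℕ) :
    ∑ n ∈ Finset.Icc 1 N, g n ≤ (∫ x in (0 : ℝ)..N, g x) + 2 * M := by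
  induction N with
  | zero => simpa using (hg0 0).trans (hgM 0)
  | succ N ih =>
    rw [Finset.sum_Icc_succ_top (by omega), integral_zero_natCast_succ hint N]
    push_cast
    rcases lt_or_ge p N with hpN | hNp
    · have hcell := hanti.le_integral_unit hint (a := N)
        (Ioc_subset_Ioi_self.trans (Ioi_subset_Ioi hpN.le))
      linarith
    · have hcell := le_integral_unit_of_forall_le hint (a := N) fun x _ => hg0 x
      linarith [sum_le_integral_add_of_monotoneOn hint hg0 hgM hmono hNp, hgM (N + 1)]

lemma integral_add_le_sum_add_of_antitoneOn (hint : ∀ a b, IntervalIntegrable g volume a b)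
    (hgM : ∀ x, g x ≤ M) (hmono : MonotoneOn g (Ioc 0 p)) (hanti : AntitoneOn g (Ioi p))
    {N : ℕ} (hN : p < N) :
    (∫ x in (0 : ℝ)..N, g x) + g N ≤ ∑ n ∈ Finset.Icc 1 N, g n + M := by
  induction N with
  | zero => simpa using hgM 0
  | succ N ih =>
    rw [Finset.sum_Icc_succ_top (by omega), integral_zero_natCast_succ hint N]
    push_cast at hN ⊢
    rcases lt_or_ge p N with hpN | hNp
    · have hcell := hanti.integral_unit_le hint (a := N) ((Icc_subset_Ioi_iff (by linarith)).2 hpN)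
      linarith [ih hpN]
    · have hcell := integral_unit_le_of_forall_le hint (a := N) fun x _ => hgM x
      linarith [integral_le_sum_of_monotoneOn hint hmono hNp]

theorem abs_sum_sub_integral_le_of_unimodal (hg : Measurable g) (hg0 : ∀ x, 0 ≤ g x)
    (hgM : ∀ x, g x ≤ M) (hmono : MonotoneOn g (Ioc 0 p)) (hanti : AntitoneOn g (Ioi p))
    {T : ℝ} (hT : 0 ≤ T) :
    |∑ n ∈ Finset.Icc 1 ⌊T⌋₊, g n - ∫ x in (0 : ℝ)..T, g x| ≤ 2 * M := by
  have hint := hg.intervalIntegrable_of_nonneg_of_le hg0 hgM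
  have hM : 0 ≤ M := (hg0 0).trans (hgM 0)
  set N := ⌊T⌋₊
  have hNT : (N : ℝ) ≤ T := Nat.floor_le hT
  have hsplit : ∫ x in (0 : ℝ)..T, g x = (∫ x in (0 : ℝ)..N, g x) + ∫ x in (N : ℝ)..T, g x :=
    (intervalIntegral.integral_add_adjacent_intervals (hint _ _) (hint _ _)).symm
  have htail_nonneg : 0 ≤ ∫ x in (N : ℝ)..T, g x :=
    intervalIntegral.integral_nonneg hNT fun x _ => hg0 x
  have htail_le : ∫ x in (N : ℝ)..T, g x ≤ M := calc
    _ ≤ ∫ _ in (N : ℝ)..T, M :=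
      intervalIntegral.integral_mono_on hNT (hint _ _) intervalIntegrable_const fun x _ => hgM x
    _ = (T - N) * M := by rw [intervalIntegral.integral_const, smul_eq_mul]
    _ ≤ M := mul_le_of_le_one_left hM (by linarith [Nat.lt_floor_add_one T])
  have hlower : ∫ x in (0 : ℝ)..N, g x ≤ ∑ n ∈ Finset.Icc 1 N, g n + M := by
    rcases le_or_gt (N : ℝ) p with hNp | hpN
    · linarith [integral_le_sum_of_monotoneOn hint hmono hNp]
    · linarith [integral_add_le_sum_add_of_antitoneOn hint hgM hmono hanti hpN, hg0 N]
  rw [abs_le]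
  constructor
  · linarith
  · linarith [sum_le_integral_add_two_mul hint hg0 hgM hmono hanti N]

end UnitMesh

theorem abs_sum_sub_integral_div_le_of_unimodal {f : ℝ → ℝ} {M p δ L : ℝ} (hf : Measurable f)
    (hf0 : ∀ x, 0 ≤ f x) (hfM : ∀ x, f x ≤ M) (hmono : MonotoneOn f (Ioc 0 p))
    (hanti : AntitoneOn f (Ioi p)) (hδ : 0 < δ) (hL : 0 ≤ L) :
    |∑ n ∈ Finset.Icc 1 ⌊L / δ⌋₊, f (n * δ) - (∫ x in (0 : ℝ)..L, f x) / δ| ≤ 2 * M := by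
  have key := abs_sum_sub_integral_le_of_unimodal (g := fun x => f (x * δ)) (p := p / δ)
    (hf.comp (measurable_id.mul_const δ)) (fun x => hf0 _) (fun x => hfM _)
    (fun x hx y hy hxy => hmono ⟨mul_pos hx.1 hδ, (le_div_iff₀ hδ).1 hx.2⟩
      ⟨mul_pos hy.1 hδ, (le_div_iff₀ hδ).1 hy.2⟩ (mul_le_mul_of_nonneg_right hxy hδ.le))
    (fun x hx y hy hxy => hanti ((div_lt_iff₀ hδ).1 hx) ((div_lt_iff₀ hδ).1 hy)
      (mul_le_mul_of_nonneg_right hxy hδ.le))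
    (div_nonneg hL hδ.le)
  rwa [intervalIntegral.integral_comp_mul_right f hδ.ne', zero_mul, div_mul_cancel₀ L hδ.ne',
    smul_eq_mul, inv_mul_eq_div] at key

lemma exists_sign_change_of_monotoneOn {φ : ℝ → ℝ} {r : ℝ} (hr : 0 < r)
    (hφ : MonotoneOn φ (Ioc 0 r)) (hc : ContinuousOn φ (Ioc 0 r)) :
    ∃ p ∈ Icc 0 r, (∀ v ∈ Ioc 0 p, φ v ≤ 0) ∧ ∀ v ∈ Ioc p r, 0 ≤ φ v := by
  have hrr : r ∈ Ioc 0 r := ⟨hr, le_rfl⟩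
  by_cases hφr : φ r ≤ 0
  · exact ⟨r, ⟨hr.le, le_rfl⟩, fun v hv => (hφ hv hrr hv.2).trans hφr,
      fun v hv => absurd hv.2 (not_le.2 hv.1)⟩
  by_cases hw : ∃ w ∈ Ioc 0 r, φ w ≤ 0
  · obtain ⟨w, hw, hφw⟩ := hw
    obtain ⟨p, hp, hφp⟩ := intermediate_value_Icc hw.2
      (hc.mono ((Icc_subset_Ioc_iff hw.2).2 ⟨hw.1, le_rfl⟩)) ⟨hφw, (not_le.1 hφr).le⟩
    have hp0 : 0 < p := hw.1.trans_le hp.1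
    exact ⟨p, ⟨hp0.le, hp.2⟩, fun v hv => hφp ▸ hφ ⟨hv.1, hv.2.trans hp.2⟩ ⟨hp0, hp.2⟩ hv.2,
      fun v hv => hφp ▸ hφ ⟨hp0, hp.2⟩ ⟨hp0.trans hv.1, hv.2⟩ hv.1.le⟩
  · push Not at hw
    exact ⟨0, ⟨le_rfl, hr.le⟩, fun v hv => absurd hv.2 (not_le.2 hv.1), fun v hv => (hw v hv).le⟩

lemma exists_monotoneOn_antitoneOn_min {A B : ℝ → ℝ} {r : ℝ} (hr : 0 < r)
    (hA : AntitoneOn A (Ioi 0)) (hB₁ : MonotoneOn B (Ioc 0 r)) (hB₂ : AntitoneOn B (Ioi r))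
    (hc : ContinuousOn (fun v => B v - A v) (Ioc 0 r)) :
    ∃ p, MonotoneOn (fun v => min (A v) (B v)) (Ioc 0 p) ∧
      AntitoneOn (fun v => min (A v) (B v)) (Ioi p) := by
  obtain ⟨p, hp, hBA, hAB⟩ := exists_sign_change_of_monotoneOn hr
    (fun a ha b hb hab => sub_le_sub (hB₁ ha hb hab) (hA ha.1 hb.1 hab)) hc
  refine ⟨p, (hB₁.mono (Ioc_subset_Ioc_right hp.2)).congr fun v hv => ?_, fun v hv w hw hvw => ?_⟩
  · exact (min_eq_right (sub_nonpos.1 (hBA v hv))).symm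
  · dsimp only
    have hv0 : 0 < v := hp.1.trans_lt hv
    have hAvw : A w ≤ A v := hA hv0 (hv0.trans_le hvw) hvw
    rcases le_or_gt v r with hvr | hrv
    · rw [min_eq_left (sub_nonneg.1 (hAB v ⟨hv, hvr⟩))]
      exact (min_le_left _ _).trans hAvw
    · exact min_le_min hAvw (hB₂ hrv (hrv.trans_le hvw) hvw)

lemma abs_mul_sub_le_one_and_abs_mul_add_le_one_iff {a b s : ℝ} (ha : 0 < a) (hb : 0 ≤ b) :
    |a * s - b| ≤ 1 ∧ |a * s + b| ≤ 1 ↔ |s| ≤ 1 / a - b / a := by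
  have has : |s| * a = |a * s| := by rw [abs_mul, abs_of_pos ha, mul_comm]
  rw [← sub_div, le_div_iff₀ ha, has, abs_le, abs_le, abs_le]
  constructor
  · rintro ⟨⟨h₁, h₂⟩, h₃, h₄⟩
    constructor <;> linarith
  · rintro ⟨h₁, h₂⟩
    exact ⟨⟨by linarith, by linarith⟩, by linarith, by linarith⟩

lemma volume_setOf_le_abs_add_le (c : ℝ) {a b : ℝ} (ha : 0 ≤ a) :
    volume {t : ℝ | a ≤ |t + c| ∧ |t + c| ≤ b} = ENNReal.ofReal (2 * (b - a)) := by
  have hset : {t : ℝ | a ≤ |t + c| ∧ |t + c| ≤ b} = (· + c) ⁻¹' (Icc (-b) b \ Ioo (-a) a) := by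
    ext t
    simp only [mem_ofPred_eq, mem_preimage, mem_sdiff, mem_Icc, mem_Ioo, ← abs_le, ← abs_lt,
      not_lt]
    tauto
  rw [hset, measure_preimage_add_right]
  rcases le_or_gt a b with hab | hba
  · rw [measure_sdiff (Ioo_subset_Icc_self.trans (Icc_subset_Icc (by linarith) hab))
      measurableSet_Ioo.nullMeasurableSet measure_Ioo_lt_top.ne, Real.volume_Icc, Real.volume_Ioo,
      ← ENNReal.ofReal_sub _ (by linarith)]
    ring_nf
  · rw [sdiff_eq_empty.2 (Icc_subset_Ioo (by linarith) hba), measure_empty,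
      ENNReal.ofReal_of_nonpos (by linarith)]

lemma sqrt_sub_sqrt_le {x y : ℝ} (h : y ≤ x) : √x - √y ≤ √(x - y) := by
  rcases le_or_gt 0 y with hy | hy
  · rw [sub_le_iff_le_add, Real.sqrt_le_left (by positivity)]
    nlinarith [Real.sq_sqrt hy, Real.sq_sqrt (sub_nonneg.2 h), Real.sqrt_nonneg y,
      Real.sqrt_nonneg (x - y)]
  · rw [Real.sqrt_eq_zero'.2 hy.le, sub_zero]
    exact Real.sqrt_le_sqrt (by linarith)

lemma antitoneOn_sqrt_add_sub_sqrt_sub {ε : ℝ} (hε : 0 < ε) :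
    AntitoneOn (fun x => √(x + ε) - √(x - ε)) (Ici ε) := by
  have hpos : ∀ x ∈ Ici ε, 0 < √(x + ε) + √(x - ε) := fun x hx =>
    add_pos_of_pos_of_nonneg (Real.sqrt_pos.2 (by simp only [mem_Ici] at hx; linarith))
      (Real.sqrt_nonneg _)
  have hdiff : ∀ x ∈ Ici ε, √(x + ε) - √(x - ε) = 2 * ε / (√(x + ε) + √(x - ε)) := by
    intro x hx
    have hx' : ε ≤ x := hx
    rw [eq_div_iff (hpos x hx).ne']
    nlinarith [Real.sq_sqrt (show 0 ≤ x + ε by linarith), Real.sq_sqrt (show 0 ≤ x - ε by linarith)]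
  intro x hx y hy hxy
  simp only [hdiff x hx, hdiff y hy]
  exact div_le_div_of_nonneg_left (by positivity) (hpos x hx)
    (add_le_add (Real.sqrt_le_sqrt (by linarith)) (Real.sqrt_le_sqrt (by linarith)))

namespace F1

def center (u v : ℝ) : ℝ := v ^ 2 / (2 * u)

def boxRadius (u v : ℝ) : ℝ := min (1 / u ^ 2) (1 / (u * v)) - center u v

def outerRadius (u v : ℝ) : ℝ := √(center u v ^ 2 + 1 / u)

def innerRadius (u v : ℝ) : ℝ := √(center u v ^ 2 - 1 / u)

def profile (u v : ℝ) : ℝ :=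
  max (2 * (min (boxRadius u v) (outerRadius u v) - innerRadius u v)) 0

def peak (u : ℝ) : ℝ := √(2 * √u)

variable {u v : ℝ}

lemma box_iff (hu : 0 < u) (hv : 0 < v) (t : ℝ) :
    (|u * v * t| ≤ 1 ∧ |u * v * t + v ^ 3| ≤ 1 ∧ |u ^ 2 * t| ≤ 1 ∧ |u ^ 2 * t + u * v ^ 2| ≤ 1) ↔
      |t + center u v| ≤ boxRadius u v := by
  have h₁ := abs_mul_sub_le_one_and_abs_mul_add_le_one_iff (s := t + center u v)
    (mul_pos hu hv) (by positivity : 0 ≤ v ^ 3 / 2)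
  have h₂ := abs_mul_sub_le_one_and_abs_mul_add_le_one_iff (s := t + center u v)
    (pow_pos hu 2) (by positivity : 0 ≤ u * v ^ 2 / 2)
  have hc₁ : v ^ 3 / 2 / (u * v) = center u v := by unfold center; field_simp
  have hc₂ : u * v ^ 2 / 2 / u ^ 2 = center u v := by unfold center; field_simp
  have e₁ : u * v * (t + center u v) - v ^ 3 / 2 = u * v * t := by
    unfold center; field_simp; ring
  have e₂ : u * v * (t + center u v) + v ^ 3 / 2 = u * v * t + v ^ 3 := by
    unfold center; field_simp; ring
  have e₃ : u ^ 2 * (t + center u v) - u * v ^ 2 / 2 = u ^ 2 * t := by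
    unfold center; field_simp; ring
  have e₄ : u ^ 2 * (t + center u v) + u * v ^ 2 / 2 = u ^ 2 * t + u * v ^ 2 := by
    unfold center; field_simp; ring
  rw [e₁, e₂, hc₁] at h₁
  rw [e₃, e₄, hc₂] at h₂
  rw [← and_assoc, h₁, h₂, boxRadius, ← min_sub_sub_right, le_min_iff, and_comm]

lemma abs_quadratic_le_one_iff (hu : 0 < u) (t : ℝ) :
    |t * (u * t + v ^ 2)| ≤ 1 ↔
      innerRadius u v ≤ |t + center u v| ∧ |t + center u v| ≤ outerRadius u v := by
  have hq : t * (u * t + v ^ 2) = u * ((t + center u v) ^ 2 - center u v ^ 2) := by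
    unfold center; field_simp; ring
  have hlo : center u v ^ 2 - 1 / u ≤ (t + center u v) ^ 2 ↔
      -1 ≤ u * ((t + center u v) ^ 2 - center u v ^ 2) := by
    rw [sub_le_comm, le_div_iff₀ hu]
    constructor <;> intro h <;> linarith
  have hhi : (t + center u v) ^ 2 ≤ center u v ^ 2 + 1 / u ↔
      u * ((t + center u v) ^ 2 - center u v ^ 2) ≤ 1 := by
    rw [← sub_le_iff_le_add', le_div_iff₀ hu, mul_comm]
  rw [hq, abs_le, innerRadius, outerRadius, ← Real.sqrt_sq_eq_abs,
    Real.sqrt_le_sqrt_iff (sq_nonneg _), Real.sqrt_le_sqrt_iff (by positivity), hlo, hhi]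

theorem eq_profile (hu : 0 < u) (hv : 0 < v) : F1 u v = profile u v := by
  have hroots : volume {t : ℝ | t * (u * t + v ^ 2) = 0} = 0 := by
    refine (Set.Finite.subset (toFinite {0, -(v ^ 2 / u)}) fun t ht => ?_).measure_zero _
    rcases mul_eq_zero.1 ht with h | h
    · exact Or.inl h
    · right
      rw [mem_singleton_iff, neg_div', eq_div_iff hu.ne']
      linarith
  have hset : {t : ℝ | 0 < |t * (u * t + v ^ 2)| ∧ |t * (u * t + v ^ 2)| ≤ 1 ∧
      |u * v * t| ≤ 1 ∧ |u * v * t + v ^ 3| ≤ 1 ∧ |u ^ 2 * t| ≤ 1 ∧ |u ^ 2 * t + u * v ^ 2| ≤ 1} =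
      {t | innerRadius u v ≤ |t + center u v| ∧
        |t + center u v| ≤ min (boxRadius u v) (outerRadius u v)} \
      {t | t * (u * t + v ^ 2) = 0} := by
    ext t
    simp only [mem_ofPred_eq, mem_sdiff, abs_pos, box_iff hu hv, abs_quadratic_le_one_iff hu,
      le_min_iff]
    tauto
  have hinner : 0 ≤ innerRadius u v := Real.sqrt_nonneg _
  rw [F1, hset, measure_sdiff_null hroots, volume_setOf_le_abs_add_le _ hinner,
    ENNReal.toReal_ofReal']
  rfl

lemma measurable_profile (u : ℝ) : Measurable (profile u) := by
  unfold profile boxRadius outerRadius innerRadius center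
  fun_prop

lemma profile_nonneg (u v : ℝ) : 0 ≤ profile u v := le_max_right _ _

lemma profile_le (hu : 0 < u) (v : ℝ) : profile u v ≤ 2 * √(2 / u) := by
  refine max_le ?_ (by positivity)
  have hsub := sqrt_sub_sqrt_le (x := center u v ^ 2 + 1 / u) (y := center u v ^ 2 - 1 / u)
    (by linarith [one_div_pos.2 hu])
  rw [show center u v ^ 2 + 1 / u - (center u v ^ 2 - 1 / u) = 2 / u by ring] at hsub
  have := min_le_right (boxRadius u v) (outerRadius u v)
  rw [outerRadius, innerRadius] at *
  linarith

lemma center_nonneg (hu : 0 < u) (v : ℝ) : 0 ≤ center u v := by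
  unfold center
  positivity

lemma monotoneOn_center_sq (hu : 0 < u) : MonotoneOn (fun v => center u v ^ 2) (Ici 0) :=
  fun a ha _ _ hab => pow_le_pow_left₀ (center_nonneg hu a)
    (div_le_div_of_nonneg_right (pow_le_pow_left₀ ha hab 2) (by positivity)) 2

lemma antitoneOn_boxRadius (hu : 0 < u) : AntitoneOn (boxRadius u) (Ioi 0) := by
  intro a ha b hb hab
  refine sub_le_sub (min_le_min le_rfl
    (one_div_le_one_div_of_le (mul_pos hu ha) (mul_le_mul_of_nonneg_left hab hu.le))) ?_
  exact div_le_div_of_nonneg_right (pow_le_pow_left₀ (le_of_lt ha) hab 2) (by positivity)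

lemma monotoneOn_outerRadius (hu : 0 < u) : MonotoneOn (outerRadius u) (Ici 0) :=
  fun _ ha _ hb hab => Real.sqrt_le_sqrt (add_le_add_left (monotoneOn_center_sq hu ha hb hab) _)

lemma monotoneOn_innerRadius (hu : 0 < u) : MonotoneOn (innerRadius u) (Ici 0) :=
  fun _ ha _ hb hab => Real.sqrt_le_sqrt (sub_le_sub_right (monotoneOn_center_sq hu ha hb hab) _)

lemma center_peak_sq (hu : 0 < u) : center u (peak u) ^ 2 = 1 / u := by
  unfold center peak
  rw [Real.sq_sqrt (by positivity), div_pow, mul_pow, Real.sq_sqrt hu.le]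
  field_simp

lemma monotoneOn_outerRadius_sub_innerRadius (hu : 0 < u) :
    MonotoneOn (fun v => outerRadius u v - innerRadius u v) (Ioc 0 (peak u)) := by
  refine ((monotoneOn_outerRadius hu).mono fun v hv => le_of_lt hv.1).congr fun v hv => ?_
  have hsq : center u v ^ 2 ≤ 1 / u :=
    center_peak_sq hu ▸ monotoneOn_center_sq hu (le_of_lt hv.1) (Real.sqrt_nonneg _) hv.2
  rw [innerRadius, Real.sqrt_eq_zero'.2 (sub_nonpos.2 hsq), sub_zero]

lemma antitoneOn_outerRadius_sub_innerRadius (hu : 0 < u) :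
    AntitoneOn (fun v => outerRadius u v - innerRadius u v) (Ioi (peak u)) := by
  have hpeak : (0 : ℝ) ≤ peak u := Real.sqrt_nonneg _
  have hsq : ∀ v ∈ Ioi (peak u), 1 / u ≤ center u v ^ 2 := fun v hv =>
    center_peak_sq hu ▸ monotoneOn_center_sq hu hpeak (hpeak.trans (le_of_lt hv)) (le_of_lt hv)
  intro a ha b hb hab
  exact antitoneOn_sqrt_add_sub_sqrt_sub (one_div_pos.2 hu) (hsq a ha) (hsq b hb)
    (monotoneOn_center_sq hu (hpeak.trans (le_of_lt ha)) (hpeak.trans (le_of_lt hb)) hab)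

lemma antitoneOn_boxRadius_sub_innerRadius (hu : 0 < u) :
    AntitoneOn (fun v => boxRadius u v - innerRadius u v) (Ioi 0) :=
  fun _ ha _ hb hab => sub_le_sub (antitoneOn_boxRadius hu ha hb hab)
    (monotoneOn_innerRadius hu (Ioi_subset_Ici_self ha) (Ioi_subset_Ici_self hb) hab)

lemma continuousOn_outerRadius_sub_boxRadius (hu : 0 < u) :
    ContinuousOn (fun v => outerRadius u v - boxRadius u v) (Ioi 0) := by
  unfold outerRadius boxRadius center
  refine continuousOn_of_forall_continuousAt fun v hv => ?_
  have huv : u * v ≠ 0 := (mul_pos hu hv).ne'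
  fun_prop (disch := assumption)

theorem exists_monotoneOn_antitoneOn_profile (hu : 0 < u) :
    ∃ p, MonotoneOn (profile u) (Ioc 0 p) ∧ AntitoneOn (profile u) (Ioi p) := by
  obtain ⟨p, hmono, hanti⟩ := exists_monotoneOn_antitoneOn_min (Real.sqrt_pos.2 (by positivity))
    (antitoneOn_boxRadius_sub_innerRadius hu) (monotoneOn_outerRadius_sub_innerRadius hu)
    (antitoneOn_outerRadius_sub_innerRadius hu)
    (((continuousOn_outerRadius_sub_boxRadius hu).mono fun _ hv => hv.1).congr fun v _ => by ring)
  have hψ : Monotone fun y : ℝ => max (2 * y) 0 := fun a b h => max_le_max (by linarith) le_rfl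
  have hprofile : profile u = (fun y => max (2 * y) 0) ∘
      fun v => min (boxRadius u v - innerRadius u v) (outerRadius u v - innerRadius u v) :=
    funext fun v => by simp only [profile, Function.comp, min_sub_sub_right]
  rw [hprofile]
  exact ⟨p, hψ.comp_monotoneOn hmono, hψ.comp_antitoneOn hanti⟩

end F1

/-- Euler–Maclaurin type estimate: the Riemann sum of `F₁(u, ·)` with mesh `δ`
approximates `F₂(u)/δ` with error at most `6/√u`. -/
theorem riemann_sum_F1_approx (u δ : ℝ) (hu : 0 < u) (hδ : 0 < δ) :
    |(∑ n ∈ Finset.Icc 1 ⌊1 / (δ * u ^ 2)⌋₊, F1 u (n * δ)) - F2 u / δ|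
      ≤ 6 / Real.sqrt u := by
  obtain ⟨p, hmono, hanti⟩ := F1.exists_monotoneOn_antitoneOn_profile hu
  have hsum : ∑ n ∈ Finset.Icc 1 ⌊1 / (δ * u ^ 2)⌋₊, F1 u (n * δ) =
      ∑ n ∈ Finset.Icc 1 ⌊1 / u ^ 2 / δ⌋₊, F1.profile u (n * δ) := by
    rw [div_div, mul_comm (u ^ 2)]
    refine Finset.sum_congr rfl fun n hn => F1.eq_profile hu (mul_pos ?_ hδ)
    exact Nat.cast_pos.2 (Finset.mem_Icc.1 hn).1
  have hint : F2 u = ∫ v in (0 : ℝ)..1 / u ^ 2, F1.profile u v :=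
    intervalIntegral.integral_congr_ae <| ae_of_all _ fun v hv =>
      F1.eq_profile hu (by rw [uIoc_of_le (by positivity)] at hv; exact hv.1)
  have hsqrt2 : √2 ≤ 3 / 2 := by rw [Real.sqrt_le_left (by norm_num)]; norm_num
  rw [hsum, hint]
  calc _ ≤ 2 * (2 * √(2 / u)) :=
        abs_sum_sub_integral_div_le_of_unimodal (F1.measurable_profile u) (F1.profile_nonneg u)
          (F1.profile_le hu) hmono hanti hδ (by positivity)
    _ = 4 * √2 / √u := by rw [Real.sqrt_div' _ hu.le]; ring
    _ ≤ 6 / √u := div_le_div_of_nonneg_right (by linarith) (Real.sqrt_nonneg u)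
end
end

section
/- Let η1, η2, η3, η4 be positive integers with η2, η3, η4 pairwise coprime. Then ∑_{k3 | η1, gcd(k3, η2η3) = 1} (μ(k3)/k3) · ∑_{k2 | η1η2, gcd(k2, k3η4) = 1} (μ(k2)/k2) · ∑_{k1 | η1η3η4} (μ(k1)/k1) = φ*(η1)·φ*(η2)·φ*(η3)·φ*(η4)·∏_{p | η1, p ∤ η2η3η4} (1 − 2/p), where μ is the Möbius function and the sums over k1, k2, k3 range over positive divisors. -/
open ArithmeticFunction Finset

noncomputable section

/-- `φ*(n) = ∏_{p | n} (1 - 1/p)`. -/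
def phiStar (n : ℕ) : ℝ := ∏ p ∈ n.primeFactors, (1 - 1 / (p : ℝ))
private lemma squarefree_prod_primes' {s : Finset ℕ} (hs : ∀ p ∈ s, p.Prime) :
    Squarefree (∏ p ∈ s, p) := by
  induction s using Finset.induction_on with
  | empty => simpa using squarefree_one
  | @insert a s hx ih =>
    rw [Finset.prod_insert hx]
    have ha := hs a (mem_insert_self ..)
    have hcop : Nat.Coprime a (∏ p ∈ s, p) :=
      Nat.Coprime.prod_right fun q hq =>
        (Nat.coprime_primes ha (hs q (mem_insert_of_mem hq))).2 (by rintro rfl; exact hx hq)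
    exact (Nat.squarefree_mul hcop).2
      ⟨ha.prime.squarefree, ih fun p hp => hs p (mem_insert_of_mem hp)⟩

private def gFun (g : ℕ → ℝ) : ArithmeticFunction ℝ := ⟨fun n => if n = 0 then 0 else g n, by simp⟩

private lemma gFun_apply (g : ℕ → ℝ) {n : ℕ} (hn : n ≠ 0) : gFun g n = g n := by
  simp [gFun, hn]

private lemma gFun_mult {g : ℕ → ℝ} (hg1 : g 1 = 1)
    (hg : ∀ a b : ℕ, Nat.Coprime a b → g (a * b) = g a * g b) :
    (gFun g).IsMultiplicative := by
  constructor
  · simp [gFun, hg1]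
  · intro m n hmn
    rcases eq_or_ne m 0 with rfl | hm
    · simp [gFun]
    rcases eq_or_ne n 0 with rfl | hn
    · simp [gFun]
    rw [gFun_apply g hm, gFun_apply g hn, gFun_apply g (mul_ne_zero hm hn)]
    exact hg m n hmn

private lemma lemA {n c : ℕ} (hn : n ≠ 0) (g : ℕ → ℝ) (hg1 : g 1 = 1)
    (hg : ∀ a b : ℕ, Nat.Coprime a b → g (a * b) = g a * g b) :
    ∑ k ∈ n.divisors.filter (fun k => Nat.Coprime k c), ((moebius k : ℤ) : ℝ) * g k
      = ∏ p ∈ n.primeFactors.filter (fun p => ¬ p ∣ c), (1 - g p) := by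
  set P := n.primeFactors.filter (fun p => ¬ p ∣ c) with hPdef
  have hPp : ∀ p ∈ P, p.Prime := fun p hp => Nat.prime_of_mem_primeFactors (mem_filter.mp hp).1
  set r := ∏ p ∈ P, p with hrdef
  have hrsq : Squarefree r := squarefree_prod_primes' hPp
  have hrP : r.primeFactors = P := Nat.primeFactors_prod hPp
  have hrn : r ∣ n :=
    (Finset.prod_dvd_prod_of_subset _ _ _ (filter_subset _ _)).trans (Nat.prod_primeFactors_dvd n)
  have hdiv : r.divisors = (n.divisors.filter (fun k => Nat.Coprime k c)).filter Squarefree := by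
    ext d
    simp only [Nat.mem_divisors, mem_filter]
    constructor
    · rintro ⟨hdr, hr0⟩
      refine ⟨⟨⟨hdr.trans hrn, hn⟩, ?_⟩, hrsq.squarefree_of_dvd hdr⟩
      by_contra hcop
      obtain ⟨q, hq, hqd, hqc⟩ := Nat.Prime.not_coprime_iff_dvd.mp hcop
      have hqP : q ∈ P := by rw [← hrP]; exact Nat.mem_primeFactors.mpr ⟨hq, hqd.trans hdr, hr0⟩
      exact (mem_filter.mp hqP).2 hqc
    · rintro ⟨⟨⟨hdn, -⟩, hcop⟩, hsq⟩
      refine ⟨?_, hrsq.ne_zero⟩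
      have hsub : d.primeFactors ⊆ P := by
        intro q hq
        obtain ⟨hq1, hq2, -⟩ := Nat.mem_primeFactors.mp hq
        refine mem_filter.mpr ⟨Nat.mem_primeFactors.mpr ⟨hq1, hq2.trans hdn, hn⟩, fun hqc => ?_⟩
        exact hq1.ne_one ((Nat.Coprime.coprime_dvd_left hq2 hcop).eq_one_of_dvd hqc)
      calc d = ∏ p ∈ d.primeFactors, p := (Nat.prod_primeFactors_of_squarefree hsq).symm
        _ ∣ r := Finset.prod_dvd_prod_of_subset _ _ _ hsub
  have hmult := gFun_mult hg1 hg
  have step1 : ∑ k ∈ n.divisors.filter (fun k => Nat.Coprime k c), ((moebius k : ℤ) : ℝ) * g k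
      = ∑ k ∈ r.divisors, ((moebius k : ℤ) : ℝ) * gFun g k := by
    rw [hdiv]
    refine (Finset.sum_subset (filter_subset _ _) ?_).symm.trans
      (Finset.sum_congr rfl fun d hd => ?_)
    · intro x hx hnx
      have hxs : ¬ Squarefree x := fun h => hnx (mem_filter.mpr ⟨hx, h⟩)
      simp [moebius_eq_zero_of_not_squarefree hxs]
    · have hd0 : d ≠ 0 := by
        have := Nat.pos_of_mem_divisors (show d ∈ r.divisors by rw [hdiv]; exact hd)
        omega
      rw [gFun_apply g hd0]
  rw [step1, ← IsMultiplicative.prodPrimeFactors_one_sub_of_squarefree _ hmult hrsq, hrP]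
  refine Finset.prod_congr rfl fun p hp => ?_
  rw [gFun_apply g (hPp p hp).ne_zero]

/-- filtered moebius inverse sum as a product. -/
private lemma sum_moebius_inv_filter {n : ℕ} (c : ℕ) (hn : n ≠ 0) :
    ∑ k ∈ n.divisors.filter (fun k => Nat.Coprime k c), ((moebius k : ℤ) : ℝ) * (k : ℝ)⁻¹
      = ∏ p ∈ n.primeFactors.filter (fun p => ¬ p ∣ c), (1 - (p : ℝ)⁻¹) := by
  exact lemA hn (fun k => (k : ℝ)⁻¹) (by simp)
    (fun a b _ => by push_cast; rw [mul_inv])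

private lemma sum_moebius_inv {n : ℕ} (hn : n ≠ 0) :
    ∑ k ∈ n.divisors, ((moebius k : ℤ) : ℝ) * (k : ℝ)⁻¹
      = ∏ p ∈ n.primeFactors, (1 - (p : ℝ)⁻¹) := by
  rw [show n.divisors = n.divisors.filter (fun k => Nat.Coprime k 1) from
    (Finset.filter_true_of_mem fun _ _ => Nat.coprime_one_right _).symm,
    sum_moebius_inv_filter 1 hn]
  have h1 : n.primeFactors.filter (fun p => ¬ p ∣ 1) = n.primeFactors :=
    Finset.filter_true_of_mem fun p hp => fun h =>
      (Nat.prime_of_mem_primeFactors hp).ne_one (Nat.eq_one_of_dvd_one h)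
  rw [h1]


set_option maxHeartbeats 1000000 in
theorem moebius_triple_sum (η1 η2 η3 η4 : ℕ)
    (h1 : 0 < η1) (h2 : 0 < η2) (h3 : 0 < η3) (h4 : 0 < η4)
    (h23 : Nat.Coprime η2 η3) (h24 : Nat.Coprime η2 η4) (h34 : Nat.Coprime η3 η4) :
    (∑ k3 ∈ η1.divisors.filter (fun k => Nat.Coprime k (η2 * η3)),
      ((moebius k3 : ℤ) : ℝ) / (k3 : ℝ) *
        ((∑ k2 ∈ (η1 * η2).divisors.filter (fun k => Nat.Coprime k (k3 * η4)),
            ((moebius k2 : ℤ) : ℝ) / (k2 : ℝ)) *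
          ∑ k1 ∈ (η1 * η3 * η4).divisors, ((moebius k1 : ℤ) : ℝ) / (k1 : ℝ)))
      = phiStar η1 * phiStar η2 * phiStar η3 * phiStar η4 *
          ∏ p ∈ η1.primeFactors.filter (fun p => ¬ p ∣ η2 * η3 * η4), (1 - 2 / (p : ℝ)) := by
  have h10 : η1 ≠ 0 := h1.ne'
  have h20 : η2 ≠ 0 := h2.ne'
  have h30 : η3 ≠ 0 := h3.ne'
  have h40 : η4 ≠ 0 := h4.ne'
  have h120 : η1 * η2 ≠ 0 := by positivity
  have h1340 : η1 * η3 * η4 ≠ 0 := by positivity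
  -- the set S of primes of η1·η2 not dividing η4
  set S : Finset ℕ := (η1 * η2).primeFactors.filter (fun p => ¬ p ∣ η4) with hSdef
  have hSprime : ∀ p ∈ S, p.Prime := fun p hp =>
    Nat.prime_of_mem_primeFactors (mem_filter.mp hp).1
  have hup : ∀ p : ℕ, p.Prime → (1 - (p : ℝ)⁻¹) ≠ 0 := by
    intro p hp
    have h2p : (2 : ℝ) ≤ (p : ℝ) := by exact_mod_cast hp.two_le
    have hppos : (0 : ℝ) < p := by linarith
    have : (p : ℝ)⁻¹ ≤ 1 / 2 := by
      rw [inv_eq_one_div]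
      apply div_le_div_of_nonneg_left <;> linarith
    intro h; rw [sub_eq_zero] at h; rw [← h] at this; linarith
  -- the multiplicative weight for the k3 sum
  set gg : ℕ → ℝ := fun k => (k : ℝ)⁻¹ * ∏ p ∈ S.filter (fun p => p ∣ k), (1 - (p : ℝ)⁻¹)⁻¹
    with hggdef
  have hgg1 : gg 1 = 1 := by
    have : S.filter (fun p => p ∣ 1) = ∅ :=
      Finset.filter_false_of_mem fun p hp h =>
        (hSprime p hp).ne_one (Nat.eq_one_of_dvd_one h)
    simp only [hggdef]
    rw [this]
    simp
  have hggmul : ∀ a b : ℕ, Nat.Coprime a b → gg (a * b) = gg a * gg b := by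
    intro a b hab
    have hsplit : S.filter (fun p => p ∣ a * b)
        = S.filter (fun p => p ∣ a) ∪ S.filter (fun p => p ∣ b) := by
      rw [← Finset.filter_or]
      exact Finset.filter_congr fun p hp => by rw [(hSprime p hp).prime.dvd_mul]
    have hdisj : Disjoint (S.filter (fun p => p ∣ a)) (S.filter (fun p => p ∣ b)) := by
      rw [Finset.disjoint_left]
      intro p hpa hpb
      exact (hSprime p (mem_filter.mp hpa).1).ne_one
        ((Nat.Coprime.coprime_dvd_left (mem_filter.mp hpa).2 hab).eq_one_of_dvd
          (mem_filter.mp hpb).2)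
    simp only [hggdef]
    rw [hsplit, Finset.prod_union hdisj]
    push_cast
    rw [mul_inv]
    ring
  -- evaluate the k2 sum
  have hk2 : ∀ k3 : ℕ,
      (∑ k2 ∈ (η1 * η2).divisors.filter (fun k => Nat.Coprime k (k3 * η4)),
        ((moebius k2 : ℤ) : ℝ) * (k2 : ℝ)⁻¹)
      = (∏ p ∈ S, (1 - (p : ℝ)⁻¹))
          * (∏ p ∈ S.filter (fun p => p ∣ k3), (1 - (p : ℝ)⁻¹))⁻¹ := by
    intro k3
    rw [sum_moebius_inv_filter (k3 * η4) h120]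
    have hset : (η1 * η2).primeFactors.filter (fun p => ¬ p ∣ k3 * η4)
        = S.filter (fun p => ¬ p ∣ k3) := by
      rw [hSdef, Finset.filter_filter]
      refine Finset.filter_congr fun p hp => ?_
      rw [(Nat.prime_of_mem_primeFactors hp).prime.dvd_mul]
      tauto
    rw [hset]
    have h := Finset.prod_filter_mul_prod_filter_not S (fun p => p ∣ k3)
      (fun p => 1 - (p : ℝ)⁻¹)
    have hne : (∏ p ∈ S.filter (fun p => p ∣ k3), (1 - (p : ℝ)⁻¹)) ≠ 0 :=
      Finset.prod_ne_zero_iff.mpr fun p hp => hup p (hSprime p (mem_filter.mp hp).1)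
    rw [eq_mul_inv_iff_mul_eq₀ hne, mul_comm]
    exact h
  -- transform the whole LHS
  simp only [div_eq_mul_inv]
  have hC := sum_moebius_inv h1340
  have hstep : ∀ k3 ∈ η1.divisors.filter (fun k => Nat.Coprime k (η2 * η3)),
      ((moebius k3 : ℤ) : ℝ) * (k3 : ℝ)⁻¹ *
        ((∑ k2 ∈ (η1 * η2).divisors.filter (fun k => Nat.Coprime k (k3 * η4)),
            ((moebius k2 : ℤ) : ℝ) * (k2 : ℝ)⁻¹) *
          ∑ k1 ∈ (η1 * η3 * η4).divisors, ((moebius k1 : ℤ) : ℝ) * (k1 : ℝ)⁻¹)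
      = ((∏ p ∈ (η1 * η3 * η4).primeFactors, (1 - (p : ℝ)⁻¹))
          * ∏ p ∈ S, (1 - (p : ℝ)⁻¹)) * (((moebius k3 : ℤ) : ℝ) * gg k3) := by
    intro k3 _
    rw [hC, hk2 k3]
    simp only [hggdef]
    rw [← Finset.prod_inv_distrib]
    ring
  rw [Finset.sum_congr rfl hstep, ← Finset.mul_sum,
    lemA h10 gg hgg1 hggmul]
  -- evaluate 1 - gg p on the primes of η1 coprime to η2 η3
  have hT : ∀ p ∈ η1.primeFactors.filter (fun p => ¬ p ∣ η2 * η3),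
      1 - gg p = 1 - (p : ℝ)⁻¹ * (if p ∈ S then (1 - (p : ℝ)⁻¹)⁻¹ else 1) := by
    intro p hp
    have hpp := Nat.prime_of_mem_primeFactors (mem_filter.mp hp).1
    have hfp : S.filter (fun q => q ∣ p) = if p ∈ S then {p} else ∅ := by
      split_ifs with h
      · ext q
        simp only [mem_filter, mem_singleton]
        constructor
        · rintro ⟨hq, hqd⟩
          exact (Nat.prime_dvd_prime_iff_eq (hSprime q hq) hpp).mp hqd
        · rintro rfl; exact ⟨h, dvd_rfl⟩
      · ext q
        simp only [mem_filter, notMem_empty, iff_false, not_and]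
        intro hq hqd
        exact h (((Nat.prime_dvd_prime_iff_eq (hSprime q hq) hpp).mp hqd) ▸ hq)
    simp only [hggdef, hfp]
    split_ifs with h
    · rw [Finset.prod_singleton]
    · rw [Finset.prod_empty, mul_one]
  rw [Finset.prod_congr rfl hT]
  -- final product identity over the primes of η1·η2·η3·η4
  set U : Finset ℕ := (η1 * η2 * η3 * η4).primeFactors with hUdef
  have hU : ∀ m : ℕ, m ∣ η1 * η2 * η3 * η4 → m.primeFactors ⊆ U :=
    fun m hm => Nat.primeFactors_mono hm (by positivity)
  have hext : ∀ (X : Finset ℕ) (f : ℕ → ℝ), X ⊆ U →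
      ∏ p ∈ X, f p = ∏ p ∈ U, (if p ∈ X then f p else 1) := by
    intro X f hX
    rw [Finset.prod_ite_mem, Finset.inter_eq_right.mpr hX]
  have hUsub1 : (η1 * η3 * η4).primeFactors ⊆ U := hU _ ⟨η2, by ring⟩
  have hUsubS : S ⊆ U := by
    rw [hSdef]
    exact (filter_subset _ _).trans (hU (η1 * η2) ⟨η3 * η4, by ring⟩)
  have hUsubT : η1.primeFactors.filter (fun p => ¬ p ∣ η2 * η3) ⊆ U :=
    (filter_subset _ _).trans (hU η1 ⟨η2 * η3 * η4, by ring⟩)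
  have hUsubF : η1.primeFactors.filter (fun p => ¬ p ∣ η2 * η3 * η4) ⊆ U :=
    (filter_subset _ _).trans (hU η1 ⟨η2 * η3 * η4, by ring⟩)
  have hUsubP1 : η1.primeFactors ⊆ U := hU η1 ⟨η2 * η3 * η4, by ring⟩
  have hUsubP2 : η2.primeFactors ⊆ U := hU η2 ⟨η1 * η3 * η4, by ring⟩
  have hUsubP3 : η3.primeFactors ⊆ U := hU η3 ⟨η1 * η2 * η4, by ring⟩
  have hUsubP4 : η4.primeFactors ⊆ U := hU η4 ⟨η1 * η2 * η3, by ring⟩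
  simp only [phiStar, one_div]
  rw [hext _ (fun p => 1 - (p : ℝ)⁻¹) hUsub1,
    hext S (fun p => 1 - (p : ℝ)⁻¹) hUsubS,
    hext _ (fun x => 1 - (x : ℝ)⁻¹ * if x ∈ S then (1 - (x : ℝ)⁻¹)⁻¹ else 1) hUsubT,
    hext η1.primeFactors (fun p => 1 - (p : ℝ)⁻¹) hUsubP1,
    hext η2.primeFactors (fun p => 1 - (p : ℝ)⁻¹) hUsubP2,
    hext η3.primeFactors (fun p => 1 - (p : ℝ)⁻¹) hUsubP3,
    hext η4.primeFactors (fun p => 1 - (p : ℝ)⁻¹) hUsubP4,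
    hext _ (fun x => 1 - 2 * (x : ℝ)⁻¹) hUsubF,
    ← Finset.prod_mul_distrib, ← Finset.prod_mul_distrib, ← Finset.prod_mul_distrib,
    ← Finset.prod_mul_distrib, ← Finset.prod_mul_distrib, ← Finset.prod_mul_distrib]
  refine Finset.prod_congr rfl fun p hp => ?_
  have hpp : p.Prime := Nat.prime_of_mem_primeFactors hp
  have hpd := (Nat.mem_primeFactors.mp hp).2.1
  have hp0 : (p : ℝ) ≠ 0 := Nat.cast_ne_zero.mpr hpp.ne_zero
  have hu0 : (1 : ℝ) - (p : ℝ)⁻¹ ≠ 0 := hup p hpp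
  have hx1 : (p : ℝ) - 1 ≠ 0 := sub_ne_zero.mpr (Nat.one_lt_cast.mpr hpp.one_lt).ne'
  rw [Nat.Prime.dvd_mul hpp, Nat.Prime.dvd_mul hpp, Nat.Prime.dvd_mul hpp] at hpd
  simp only [hSdef, Finset.mem_filter, Nat.mem_primeFactors, Nat.Prime.dvd_mul hpp,
    ne_eq, h10, h20, h30, h40, mul_eq_zero, or_self, not_false_eq_true, and_true,
    hpp, true_and, not_or]
  by_cases hd1 : p ∣ η1 <;> by_cases hd2 : p ∣ η2 <;>
      by_cases hd3 : p ∣ η3 <;> by_cases hd4 : p ∣ η4 <;>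
    first
      | exact absurd ((Nat.Coprime.coprime_dvd_left hd2 h23).eq_one_of_dvd hd3) hpp.ne_one
      | exact absurd ((Nat.Coprime.coprime_dvd_left hd2 h24).eq_one_of_dvd hd4) hpp.ne_one
      | exact absurd ((Nat.Coprime.coprime_dvd_left hd3 h34).eq_one_of_dvd hd4) hpp.ne_one
      | (exfalso; tauto)
      | (simp only [hd1, hd2, hd3, hd4, if_true, if_false, ite_true, ite_false,
          not_true, not_false_iff, true_and, and_true, false_and, and_false, true_or,
          or_true, false_or, or_false, not_false_eq_true]
         first
           | rfl
           | ring1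
           | (rw [show (1 : ℝ) - (p : ℝ)⁻¹ = ((p : ℝ) - 1) / (p : ℝ) from by field_simp]
              field_simp
              ring1))
end
end
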